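/- arXiv:2411.10394 — 5 statements merged into one kernel-verified Lean document; each statement's English description precedes it below -/
import Mathlib

section
/- Let C ∈ T^{n×n} be supported on a DAG G on [n]. Then the tropical polyhedron tconv(C*) is contained in tconv(C) and coincides with the closed covector cell of the perfect matching (1,2,…,n) of the support graph of C; explicitly, tconv(C*) = {x ∈ ℝ^n/ℝ𝟙 : x_j − c_jj ≥ x_i − c_ij for all i, j with c_ij < ∞} = {x ∈ ℝ^n/ℝ𝟙 : x_i − x_j ≤ c_ij for all i ≠ j with c_ij < ∞} = Q(C). -/
/-!
Call `x ∈ ℝⁿ` a feasible potential of `C` when `x_i ≤ c_ij + x_j` for all `i, j`; with zero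
diagonal this is exactly `Q(C)`, and then `x = C ⊙ x`, so `Q(C) ⊆ tconv(C)`. Feasible potentials
of `C` are feasible potentials of every power of `C`, hence of `C*`, which also has zero diagonal
when `G` is acyclic: so `Q(C) ⊆ tconv(C*)`. Conversely, a point `C* ⊙ λ` is a feasible potential of
`C` by the triangle inequality `c*_ik ≤ c_ij + c*_jk`. Both facts about `C*` come from the same
observation: any finite entry of a power `C^{⊙m}` is bounded below by the weight of a walk in `G`,
and in a DAG such a walk is a path, so it has fewer than `n` steps and never returns to its start.
-/

open scoped Classical
noncomputable section

/-- The min-plus tropical semiring `T = ℝ ∪ {∞}` with `⊕ = min` and `⊙ = +`. -/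
abbrev Trop : Type := WithTop ℝ

/-- Min-plus identity matrix: `0` on the diagonal, `∞` off the diagonal. -/
def mpId {n : ℕ} : Matrix (Fin n) (Fin n) Trop := fun i j => if i = j then 0 else ⊤

/-- Min-plus matrix product. -/
def mpMul {n : ℕ} (A B : Matrix (Fin n) (Fin n) Trop) : Matrix (Fin n) (Fin n) Trop :=
  fun i j => Finset.univ.inf fun k => A i k + B k j

/-- Entrywise minimum (tropical sum) of matrices. -/
def mpAdd {n : ℕ} (A B : Matrix (Fin n) (Fin n) Trop) : Matrix (Fin n) (Fin n) Trop :=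
  fun i j => A i j ⊓ B i j

/-- Min-plus matrix power. -/
def mpPow {n : ℕ} (A : Matrix (Fin n) (Fin n) Trop) : ℕ → Matrix (Fin n) (Fin n) Trop
  | 0 => mpId
  | k + 1 => mpMul (mpPow A k) A

/-- Kleene star `A* = I ⊕ A ⊕ A^{⊙2} ⊕ ⋯ ⊕ A^{⊙(n−1)}`. -/
def kleene {n : ℕ} (A : Matrix (Fin n) (Fin n) Trop) : Matrix (Fin n) (Fin n) Trop :=
  fun i j => (Finset.range n).inf fun k => mpPow A k i j

/-- `p` is a directed path from `j` to `i` in the digraph with edge relation `E`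
(`E a b` meaning there is an edge `a → b`), recorded as its list of vertices. -/
def IsPathFrom {n : ℕ} (E : Fin n → Fin n → Prop) (j i : Fin n) (p : List (Fin n)) : Prop :=
  p.head? = some j ∧ p.getLast? = some i ∧ p.Chain' E

/-- A digraph is acyclic if the only paths from a vertex to itself are trivial. -/
def IsDAG {n : ℕ} (E : Fin n → Fin n → Prop) : Prop :=
  ∀ (j : Fin n) (p : List (Fin n)), IsPathFrom E j j p → p.length ≤ 1

/-- `C ∈ T^{n×n}` is supported on the digraph `E` : zero diagonal, and for `i ≠ j`
the entry `c_ij` is finite exactly when `j → i` is an edge. -/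
def SupportedOn {n : ℕ} (C : Matrix (Fin n) (Fin n) Trop) (E : Fin n → Fin n → Prop) : Prop :=
  (∀ i, C i i = 0) ∧ ∀ i j, i ≠ j → (C i j ≠ ⊤ ↔ E j i)

/-- The edge weight function of a weight matrix: `cw C a b = c_{ba}` is the weight of
the edge `a → b`. -/
def cw {n : ℕ} (C : Matrix (Fin n) (Fin n) Trop) : Fin n → Fin n → ℝ :=
  fun a b => WithTop.untopD 0 (C b a)

/-- Total weight of a path (sum of the weights of its consecutive edges). -/
def pathWeight {n : ℕ} (w : Fin n → Fin n → ℝ) (p : List (Fin n)) : ℝ :=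
  ((p.zip p.tail).map fun q => w q.1 q.2).sum

/-- The edge `j → i` belongs to the weighted transitive reduction `G^♭_w`:
the single edge is the unique minimum-weight directed path from `j` to `i`. -/
def InWTR {n : ℕ} (E : Fin n → Fin n → Prop) (w : Fin n → Fin n → ℝ) (j i : Fin n) : Prop :=
  E j i ∧ ∀ p : List (Fin n), IsPathFrom E j i p → p ≠ [j, i] → w j i < pathWeight w p

/-- Weighted digraph polyhedron `Q(C) = {x : x_i − x_j ≤ c_ij}` (as the saturated
subset of `ℝ^n` representing a subset of `ℝ^n/ℝ𝟙`). -/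
def wdp {n : ℕ} (C : Matrix (Fin n) (Fin n) Trop) : Set (Fin n → ℝ) :=
  {x | ∀ i j, i ≠ j → ((x i - x j : ℝ) : Trop) ≤ C i j}

/-- The tropical polyhedron generated by the columns of `V`: all min-plus linear
combinations `V ⊙ λ`, `λ ∈ ℝ^n` (as a saturated subset of `ℝ^d`). -/
def tconvM {d n : ℕ} (V : Matrix (Fin d) (Fin n) Trop) : Set (Fin d → ℝ) :=
  {x | ∃ lam : Fin n → ℝ, ∀ i, (x i : Trop) = Finset.univ.inf fun j => V i j + (lam j : Trop)}

/-- `v` is reachable from `s`. -/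
def Reaches {n : ℕ} (E : Fin n → Fin n → Prop) (s v : Fin n) : Prop :=
  ∃ p, IsPathFrom E s v p

/-- Edges of the transitive closure `G*`: `j → i` with `i ≠ j` reachable from `j`. -/
def EStar {n : ℕ} (E : Fin n → Fin n → Prop) (j i : Fin n) : Prop :=
  j ≠ i ∧ ∃ p, IsPathFrom E j i p

namespace Finset

theorem inf_add {ι α : Type*} [LinearOrderedAddCommMonoidWithTop α] (s : Finset ι)
    (f : ι → α) (c : α) : s.inf f + c = s.inf fun i => f i + c :=
  apply_inf_eq_inf_comp_of_linearOrder (· + c) (fun _ _ h => add_le_add_left h c) (top_add c)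

theorem add_inf {ι α : Type*} [LinearOrderedAddCommMonoidWithTop α] (s : Finset ι)
    (f : ι → α) (c : α) : c + s.inf f = s.inf fun i => c + f i := by
  simpa only [add_comm c] using inf_add s f c

end Finset

theorem WithTop.coe_sub_le_iff_le_add_coe {a b : ℝ} {c : Trop} :
    ((a - b : ℝ) : Trop) ≤ c ↔ (a : Trop) ≤ c + b := by
  induction c using WithTop.recTopCoe with
  | top => simp
  | coe c => norm_cast; exact sub_le_iff_le_add

theorem WithTop.coe_le_add_coe_iff {a b : ℝ} {c : Trop} :
    (a : Trop) ≤ c + b ↔ (c ≠ ⊤ → a - WithTop.untopD 0 c ≤ b) := by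
  induction c using WithTop.recTopCoe with
  | top => simp
  | coe c => norm_cast; simp [add_comm]

theorem IsPathFrom.map_range {n : ℕ} {E : Fin n → Fin n → Prop} {v : ℕ → Fin n} {m : ℕ}
    (hv : ∀ t < m, E (v t) (v (t + 1))) :
    IsPathFrom E (v 0) (v m) ((List.range (m + 1)).map v) := by
  refine ⟨?_, ?_, ?_⟩
  · rw [List.range_succ_eq_map]
    rfl
  · rw [List.range_succ, List.map_append]
    exact List.getLast?_concat
  · exact (List.isChain_map v).2 <| (List.isChain_range_succ (fun a b => E (v a) (v b)) m).2 hv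

namespace IsDAG

variable {n : ℕ} {E : Fin n → Fin n → Prop}

theorem injOn_walk (hdag : IsDAG E) {v : ℕ → Fin n} {m : ℕ}
    (hv : ∀ t < m, E (v t) (v (t + 1))) : Set.InjOn v (Set.Iic m) := by
  intro a ha b hb hab
  by_contra hne
  wlog hlt : a < b generalizing a b
  · exact this hb ha hab.symm (Ne.symm hne) (by omega)
  have hcycle := IsPathFrom.map_range (v := fun t => v (a + t)) (m := b - a)
    fun t ht => by simpa only [add_assoc] using hv (a + t) (by simp at hb; omega)
  rw [add_zero, Nat.add_sub_cancel' hlt.le, ← hab] at hcycle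
  have := hdag _ _ hcycle
  simp only [List.length_map, List.length_range] at this
  omega

theorem walk_length_lt (hdag : IsDAG E) {v : ℕ → Fin n} {m : ℕ}
    (hv : ∀ t < m, E (v t) (v (t + 1))) : m < n := by
  have := Fintype.card_le_of_injective (fun t : Fin (m + 1) => v t) fun a b hab =>
    Fin.ext (hdag.injOn_walk hv (Set.mem_Iic.2 (Nat.lt_succ_iff.1 a.2))
      (Set.mem_Iic.2 (Nat.lt_succ_iff.1 b.2)) hab)
  simpa using this

end IsDAG

section Walks

variable {n : ℕ} {C : Matrix (Fin n) (Fin n) Trop}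

def walkWeight (C : Matrix (Fin n) (Fin n) Trop) (v : ℕ → Fin n) (m : ℕ) : Trop :=
  ∑ t ∈ Finset.range m, C (v (t + 1)) (v t)

theorem walkWeight_cons (v : ℕ → Fin n) (j : Fin n) (m : ℕ) :
    walkWeight C (fun t => match t with | 0 => j | s + 1 => v s) (m + 1) =
      walkWeight C v m + C (v 0) j :=
  Finset.sum_range_succ' _ m

theorem mpPow_le_walkWeight (m : ℕ) (v : ℕ → Fin n) :
    mpPow C m (v m) (v 0) ≤ walkWeight C v m := by
  induction m generalizing v with
  | zero => simp [mpPow, mpId, walkWeight]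
  | succ m ih =>
    calc mpPow C (m + 1) (v (m + 1)) (v 0)
        ≤ mpPow C m (v (m + 1)) (v 1) + C (v 1) (v 0) := Finset.inf_le (Finset.mem_univ (v 1))
      _ ≤ walkWeight C (fun t => v (t + 1)) m + C (v 1) (v 0) := by gcongr; exact ih _
      _ = walkWeight C v (m + 1) := (Finset.sum_range_succ' (fun t => C (v (t + 1)) (v t)) m).symm

variable {E : Fin n → Fin n → Prop}

/-- Stationary steps of a walk in `C^{⊙m}` cost `c_jj = 0` and can be dropped; the remaining
steps have finite weight, so they are edges of `G`. -/
theorem SupportedOn.exists_walk_le_mpPow (hC : SupportedOn C E) {m : ℕ} {i j : Fin n}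
    (h : mpPow C m i j ≠ ⊤) :
    ∃ m' ≤ m, ∃ v : ℕ → Fin n, v 0 = j ∧ v m' = i ∧ (∀ t < m', E (v t) (v (t + 1))) ∧
      walkWeight C v m' ≤ mpPow C m i j := by
  induction m generalizing j with
  | zero =>
    obtain rfl : i = j := by_contra fun hij => h (if_neg hij)
    exact ⟨0, le_rfl, fun _ => i, rfl, rfl, by simp, by simp [walkWeight, mpPow, mpId]⟩
  | succ m ih =>
    obtain ⟨l, -, hl⟩ := Finset.exists_mem_eq_inf Finset.univ ⟨j, Finset.mem_univ j⟩
      (fun l => mpPow C m i l + C l j)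
    have heq : mpPow C (m + 1) i j = mpPow C m i l + C l j := hl
    rw [heq] at h ⊢
    obtain ⟨m', hm', v, rfl, rfl, hv, hw⟩ := ih (WithTop.add_ne_top.1 h).1
    by_cases hlj : v 0 = j
    · exact ⟨m', hm'.trans m.le_succ, v, hlj, rfl, hv, by rw [← hlj, hC.1, add_zero]; exact hw⟩
    refine ⟨m' + 1, Nat.succ_le_succ hm', fun t => match t with | 0 => j | s + 1 => v s,
      rfl, rfl, ?_, ?_⟩
    · rintro (_ | t) ht
      · exact (hC.2 _ _ hlj).1 (WithTop.add_ne_top.1 h).2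
      · exact hv t (Nat.lt_of_succ_lt_succ ht)
    · rw [walkWeight_cons]
      gcongr

end Walks

section KleeneStar

variable {n : ℕ} {E : Fin n → Fin n → Prop} {C : Matrix (Fin n) (Fin n) Trop}

theorem kleene_le_mpPow (hdag : IsDAG E) (hC : SupportedOn C E) (m : ℕ) (i j : Fin n) :
    kleene C i j ≤ mpPow C m i j := by
  by_cases h : mpPow C m i j = ⊤
  · exact h ▸ le_top
  obtain ⟨m', -, v, rfl, rfl, hv, hw⟩ := hC.exists_walk_le_mpPow h
  calc kleene C (v m') (v 0)
      ≤ mpPow C m' (v m') (v 0) := Finset.inf_le (Finset.mem_range.2 (hdag.walk_length_lt hv))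
    _ ≤ walkWeight C v m' := mpPow_le_walkWeight m' v
    _ ≤ _ := hw

theorem zero_le_mpPow_self (hdag : IsDAG E) (hC : SupportedOn C E) (m : ℕ) (i : Fin n) :
    0 ≤ mpPow C m i i := by
  by_cases h : mpPow C m i i = ⊤
  · exact h ▸ le_top
  obtain ⟨m', -, v, h0, hm, hv, hw⟩ := hC.exists_walk_le_mpPow h
  obtain rfl : m' = 0 := hdag.injOn_walk hv (Set.mem_Iic.2 le_rfl)
    (Set.mem_Iic.2 m'.zero_le) (hm.trans h0.symm)
  simpa [walkWeight] using hw

theorem kleene_self (hdag : IsDAG E) (hC : SupportedOn C E) (i : Fin n) : kleene C i i = 0 :=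
  le_antisymm ((Finset.inf_le (Finset.mem_range.2 i.pos)).trans_eq (if_pos rfl))
    (Finset.le_inf fun m _ => zero_le_mpPow_self hdag hC m i)

theorem mpPow_succ_le_add (m : ℕ) (i j k : Fin n) :
    mpPow C (m + 1) i k ≤ C i j + mpPow C m j k := by
  induction m generalizing k with
  | zero =>
    by_cases hjk : j = k
    · subst hjk
      exact (Finset.inf_le (Finset.mem_univ i)).trans (by simp [mpPow, mpId])
    · simp [mpPow, mpId, hjk]
  | succ m ih =>
    calc mpPow C (m + 2) i k
        ≤ Finset.univ.inf fun l => C i j + mpPow C m j l + C l k :=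
          Finset.inf_mono_fun fun l _ => add_le_add_left (ih l) _
      _ = C i j + mpPow C (m + 1) j k := by
          simp only [mpPow, mpMul, Finset.add_inf, add_assoc]

theorem kleene_le_add_kleene (hdag : IsDAG E) (hC : SupportedOn C E) (i j k : Fin n) :
    kleene C i k ≤ C i j + kleene C j k := by
  show kleene C i k ≤ C i j + (Finset.range n).inf fun m => mpPow C m j k
  rw [Finset.add_inf]
  exact Finset.le_inf fun m _ =>
    (kleene_le_mpPow hdag hC (m + 1) i k).trans (mpPow_succ_le_add m i j k)

end KleeneStar

section FeasiblePotentials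

variable {n : ℕ}

def feasiblePotentials (A : Matrix (Fin n) (Fin n) Trop) : Set (Fin n → ℝ) :=
  {x | ∀ i j, (x i : Trop) ≤ A i j + x j}

theorem mpId_mem_feasiblePotentials (x : Fin n → ℝ) : x ∈ feasiblePotentials mpId := by
  intro i j
  by_cases hij : i = j <;> simp [mpId, hij]

theorem mpMul_mem_feasiblePotentials {A B : Matrix (Fin n) (Fin n) Trop} {x : Fin n → ℝ}
    (hA : x ∈ feasiblePotentials A) (hB : x ∈ feasiblePotentials B) :
    x ∈ feasiblePotentials (mpMul A B) := by
  intro i j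
  rw [mpMul, Finset.inf_add]
  exact Finset.le_inf fun l _ => (hA i l).trans <| by rw [add_assoc]; gcongr; exact hB l j

theorem mpPow_mem_feasiblePotentials {A : Matrix (Fin n) (Fin n) Trop} {x : Fin n → ℝ}
    (hx : x ∈ feasiblePotentials A) (m : ℕ) : x ∈ feasiblePotentials (mpPow A m) := by
  induction m with
  | zero => exact mpId_mem_feasiblePotentials x
  | succ m ih => exact mpMul_mem_feasiblePotentials ih hx

theorem kleene_mem_feasiblePotentials {A : Matrix (Fin n) (Fin n) Trop} {x : Fin n → ℝ}
    (hx : x ∈ feasiblePotentials A) : x ∈ feasiblePotentials (kleene A) := by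
  intro i j
  rw [kleene, Finset.inf_add]
  exact Finset.le_inf fun m _ => mpPow_mem_feasiblePotentials hx m i j

theorem feasiblePotentials_subset_tconvM {A : Matrix (Fin n) (Fin n) Trop}
    (hA : ∀ i, A i i = 0) : feasiblePotentials A ⊆ tconvM A := fun x hx =>
  ⟨x, fun i => le_antisymm (Finset.le_inf fun j _ => hx i j)
    ((Finset.inf_le (Finset.mem_univ i)).trans_eq (by rw [hA, zero_add]))⟩

theorem tconvM_subset_feasiblePotentials {m : ℕ} {V : Matrix (Fin n) (Fin m) Trop}
    {A : Matrix (Fin n) (Fin n) Trop} (hV : ∀ i j k, V i k ≤ A i j + V j k) :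
    tconvM V ⊆ feasiblePotentials A := by
  rintro x ⟨lam, hlam⟩ i j
  calc (x i : Trop) = Finset.univ.inf fun k => V i k + lam k := hlam i
    _ ≤ Finset.univ.inf fun k => A i j + (V j k + lam k) :=
        Finset.inf_mono_fun fun k _ => by rw [← add_assoc]; gcongr; exact hV i j k
    _ = A i j + x j := by rw [← Finset.add_inf, hlam j]

theorem wdp_eq_feasiblePotentials {C : Matrix (Fin n) (Fin n) Trop} (hC : ∀ i, C i i = 0) :
    wdp C = feasiblePotentials C := by
  ext x
  refine forall_congr' fun i => forall_congr' fun j => ?_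
  by_cases hij : i = j
  · simp [hij, hC]
  · simp only [ne_eq, hij, not_false_eq_true, forall_const, WithTop.coe_sub_le_iff_le_add_coe]

theorem setOf_sub_untopD_le_eq_feasiblePotentials {C : Matrix (Fin n) (Fin n) Trop}
    (hC : ∀ i, C i i = 0) :
    {x : Fin n → ℝ | ∀ i j : Fin n, C i j ≠ ⊤ →
        x i - WithTop.untopD 0 (C i j) ≤ x j - WithTop.untopD 0 (C j j)} =
      feasiblePotentials C := by
  ext x
  simp only [feasiblePotentials, hC, WithTop.untopD_zero, sub_zero,
    WithTop.coe_le_add_coe_iff]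

end FeasiblePotentials

theorem tconvM_kleene_eq_feasiblePotentials {n : ℕ} {E : Fin n → Fin n → Prop}
    {C : Matrix (Fin n) (Fin n) Trop} (hdag : IsDAG E) (hC : SupportedOn C E) :
    tconvM (kleene C) = feasiblePotentials C :=
  (tconvM_subset_feasiblePotentials (kleene_le_add_kleene hdag hC)).antisymm fun _ hx =>
    feasiblePotentials_subset_tconvM (kleene_self hdag hC) (kleene_mem_feasiblePotentials hx)

/-- For `C` supported on a DAG, `tconv(C*) ⊆ tconv(C)` and `tconv(C*)`
coincides with the closed covector cell of the perfect matching `(1,…,n)`, explicitly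
`{x : x_j − c_jj ≥ x_i − c_ij whenever c_ij < ∞} = {x : x_i − x_j ≤ c_ij, i ≠ j, c_ij < ∞}
 = Q(C)`. -/
theorem stmt0 {n : ℕ} (E : Fin n → Fin n → Prop) (C : Matrix (Fin n) (Fin n) Trop)
    (hdag : IsDAG E) (hsupp : SupportedOn C E) :
    tconvM (kleene C) ⊆ tconvM C ∧
    tconvM (kleene C) =
      {x : Fin n → ℝ | ∀ i j : Fin n, C i j ≠ ⊤ →
        x i - WithTop.untopD 0 (C i j) ≤ x j - WithTop.untopD 0 (C j j)} ∧
    {x : Fin n → ℝ | ∀ i j : Fin n, C i j ≠ ⊤ →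
        x i - WithTop.untopD 0 (C i j) ≤ x j - WithTop.untopD 0 (C j j)} = wdp C := by
  rw [setOf_sub_untopD_le_eq_feasiblePotentials hsupp.1, wdp_eq_feasiblePotentials hsupp.1,
    tconvM_kleene_eq_feasiblePotentials hdag hsupp]
  exact ⟨feasiblePotentials_subset_tconvM hsupp.1, rfl, rfl⟩
end
end

section
/- A tropical polytope P ⊆ ℝ^n/ℝ𝟙 is a polytrope (i.e., P is also convex in the ordinary sense under the identification ℝ^n/ℝ𝟙 ≅ ℝ^{n−1}) if and only if P = tconv(C*) = Q(C) for some matrix C ∈ T^{n×n} whose associated weighted digraph has no negative-weight directed cycles (so that the Kleene star C* converges). -/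
open scoped Classical
noncomputable section

/-- `V` is doubly ℝ-astic: every row and every column has a finite entry. -/
def DoublyRAstic {d n : ℕ} (V : Matrix (Fin d) (Fin n) Trop) : Prop :=
  (∀ i, ∃ j, V i j ≠ ⊤) ∧ (∀ j, ∃ i, V i j ≠ ⊤)

/-- The weighted digraph of `C` has no negative-weight directed cycle. -/
def NoNegCycle {n : ℕ} (C : Matrix (Fin n) (Fin n) Trop) : Prop :=
  ∀ (j : Fin n) (p : List (Fin n)),
    IsPathFrom (fun a b => C b a ≠ ⊤) j j p → 0 ≤ pathWeight (cw C) p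

/-
For a coordinate `k`, normalise the columns of `V` to have entry `0` at `k`. A point `z` lies in
`tconv(V)` iff for every `k` some normalised column dominates `z - z_k 𝟙`. If `tconv(V)` is
convex, then for every `k` the normalised columns have a greatest element: let `u` be a maximal
one and `v` any other. Points of the polytope on the segment from (an approximation of) `u`
towards (an approximation of) `v`, close enough to `u`, are dominated by no normalised column
except those above `u`, that is, `u` itself; so they lie below `u`, which forces `v ≤ u`.
The matrix `C` whose columns are these greatest normalised columns has zero diagonal and satisfies
the triangle inequality, so `C = C*` and `tconv(C) = Q(C)`, while the covering criterion gives
`tconv(V) = Q(C)`. A point of `Q(C)` is a potential showing that `C` has no negative cycle.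
-/

open Filter Topology

theorem WithTop.coe_sub_le_iff {α : Type*} [AddCommGroup α] [LinearOrder α] [IsOrderedAddMonoid α]
    {a b : α} {c : WithTop α} : ((a - b : α) : WithTop α) ≤ c ↔ (a : WithTop α) ≤ c + b := by
  induction c using WithTop.recTopCoe with
  | top => simp
  | coe c =>
    norm_cast
    exact sub_le_iff_le_add

theorem WithTop.eventually_lt_segment {c : WithTop ℝ} {a : ℝ} (h : c < a) (b : ℝ) :
    ∀ᶠ t in 𝓝[>] (0 : ℝ), c < ((1 - t) * a + t * b : ℝ) := by
  obtain ⟨s, rfl⟩ := WithTop.ne_top_iff_exists.1 h.ne_top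
  have hlim : Tendsto (fun t : ℝ => (1 - t) * a + t * b) (𝓝[>] 0) (𝓝 a) :=
    (Continuous.tendsto' (by fun_prop) 0 _ (by simp)).mono_left nhdsWithin_le_nhds
  exact (hlim.eventually_const_lt (WithTop.coe_lt_coe.1 h)).mono fun t ht => by exact_mod_cast ht

theorem Convex.exists_forall_le_of_covered {κ ι : Type*} [Finite ι] [Nonempty ι]
    {X : Set (κ → ℝ)} (hX : Convex ℝ X) (u : ι → κ → WithTop ℝ)
    (hcover : ∀ x ∈ X, ∃ j, ∀ i, (x i : WithTop ℝ) ≤ u j i)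
    (happrox : ∀ j (M : ℝ), ∃ x ∈ X, ∀ i, u j i ⊓ M ≤ x i) :
    ∃ j, ∀ j', u j' ≤ u j := by
  obtain ⟨j₀, -, hj₀⟩ := Set.finite_univ.exists_maximalFor u Set.univ Set.univ_nonempty
  refine ⟨j₀, fun j i => ?_⟩
  by_contra hji
  rw [not_le] at hji
  obtain ⟨r, hr⟩ := WithTop.ne_top_iff_exists.1 hji.ne_top
  obtain ⟨M, hrM, hbad⟩ : ∃ M : ℝ, r < M ∧ ∀ w, u j₀ ≤ u w ∨ ∃ i', u w i' < u j₀ i' ⊓ M := by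
    refine Eventually.exists (f := atTop) <|
      (eventually_gt_atTop r).and (eventually_all.2 fun w => ?_)
    by_cases hw : u j₀ ≤ u w
    · exact Eventually.of_forall fun _ => Or.inl hw
    obtain ⟨i', hi'⟩ : ∃ i', u w i' < u j₀ i' := by simpa [Pi.le_def] using hw
    obtain ⟨s, hs⟩ := WithTop.ne_top_iff_exists.1 hi'.ne_top
    filter_upwards [eventually_gt_atTop s] with M hsM
    exact Or.inr ⟨i', lt_inf_iff.2 ⟨hi', hs ▸ WithTop.coe_lt_coe.2 hsM⟩⟩
  obtain ⟨a, haX, ha⟩ := happrox j₀ M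
  obtain ⟨b, hbX, hb⟩ := happrox j M
  have hseg : ∀ᶠ t in 𝓝[>] (0 : ℝ), t < 1 ∧ ∀ w, u j₀ ≤ u w ∨
      ∃ i', ¬ (((1 - t) * a i' + t * b i' : ℝ) : WithTop ℝ) ≤ u w i' := by
    refine ((eventually_lt_nhds zero_lt_one).filter_mono nhdsWithin_le_nhds).and
      (eventually_all.2 fun w => ?_)
    obtain hw | ⟨i', hi'⟩ := hbad w
    · exact Eventually.of_forall fun _ => Or.inl hw
    exact (WithTop.eventually_lt_segment (hi'.trans_le (ha i')) (b i')).mono fun t ht =>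
      Or.inr ⟨i', not_le.2 ht⟩
  obtain ⟨t, ⟨ht1, hsep⟩, ht0⟩ := (hseg.and self_mem_nhdsWithin).exists
  obtain ⟨w, hw⟩ := hcover _ (hX haX hbX (sub_nonneg.2 ht1.le) (le_of_lt ht0) (sub_add_cancel 1 t))
  simp only [Pi.add_apply, Pi.smul_apply, smul_eq_mul] at hw
  have hwj₀ : u w ≤ u j₀ := by
    obtain h | ⟨i', hi'⟩ := hsep w
    · exact hj₀ (Set.mem_univ w) h
    · exact absurd (hw i') hi'
  have hy : (1 - t) * a i + t * b i ≤ r := by exact_mod_cast hr ▸ (hw i).trans (hwj₀ i)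
  have har : r ≤ a i := by
    have := ha i
    rwa [← hr, inf_eq_left.2 (WithTop.coe_le_coe.2 hrM.le), WithTop.coe_le_coe] at this
  have hbr : r < b i := by
    have := (lt_inf_iff.2 ⟨hr ▸ hji, WithTop.coe_lt_coe.2 hrM⟩).trans_le (hb i)
    exact_mod_cast this
  nlinarith [mul_nonneg (sub_nonneg.2 ht1.le) (sub_nonneg.2 har), mul_pos ht0 (sub_pos.2 hbr)]

section WeightedDigraphPolyhedron

variable {n : ℕ} {C : Matrix (Fin n) (Fin n) Trop}

variable (C) in
theorem convex_wdp : Convex ℝ (wdp C) := by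
  intro x hx y hy a b ha hb hab i j hij
  have hxij := hx i j hij
  have hyij := hy i j hij
  generalize C i j = c at hxij hyij ⊢
  induction c using WithTop.recTopCoe with
  | top => exact le_top
  | coe c =>
    norm_cast at hxij hyij ⊢
    calc (a • x + b • y) i - (a • x + b • y) j = a * (x i - x j) + b * (y i - y j) := by
          simp only [Pi.add_apply, Pi.smul_apply, smul_eq_mul]; ring
      _ ≤ a * c + b * c := by gcongr
      _ = c := by rw [← add_mul, hab, one_mul]

theorem le_mpPow (h0 : ∀ i, C i i = 0) (htri : ∀ i l k, C i k ≤ C i l + C l k) :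
    ∀ p i j, C i j ≤ mpPow C p i j
  | 0, i, j => by
    rcases eq_or_ne i j with rfl | hij
    · simp [mpPow, mpId, h0]
    · simp [mpPow, mpId, hij]
  | p + 1, i, j => by
    show C i j ≤ mpMul (mpPow C p) C i j
    refine Finset.le_inf fun l _ => (htri i l j).trans ?_
    gcongr
    exact le_mpPow h0 htri p i l

theorem kleene_eq_self (h0 : ∀ i, C i i = 0) (htri : ∀ i l k, C i k ≤ C i l + C l k) :
    kleene C = C := by
  funext i j
  refine le_antisymm ?_ (Finset.le_inf fun p _ => le_mpPow h0 htri p i j)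
  rcases eq_or_ne i j with rfl | hij
  · calc kleene C i i ≤ mpPow C 0 i i := Finset.inf_le (Finset.mem_range.2 i.pos)
      _ = C i i := by simp [mpPow, mpId, h0]
  · have hn : 1 < n := by
      have := Fin.val_ne_of_ne hij
      omega
    calc kleene C i j ≤ mpMul mpId C i j := Finset.inf_le (Finset.mem_range.2 hn)
      _ ≤ mpId i i + C i j := Finset.inf_le (Finset.mem_univ i)
      _ = C i j := by simp [mpId]

theorem tconvM_eq_wdp (h0 : ∀ i, C i i = 0) (htri : ∀ i l k, C i k ≤ C i l + C l k) :
    tconvM C = wdp C := by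
  ext x
  constructor
  · rintro ⟨lam, hlam⟩ i j -
    obtain ⟨k, -, hk⟩ := Finset.exists_mem_eq_inf Finset.univ ⟨j, Finset.mem_univ j⟩
      fun k => C j k + (lam k : Trop)
    rw [WithTop.coe_sub_le_iff]
    calc (x i : Trop) ≤ C i k + lam k := by rw [hlam]; exact Finset.inf_le (Finset.mem_univ k)
      _ ≤ C i j + C j k + lam k := by gcongr; exact htri i j k
      _ = C i j + x j := by rw [hlam j, hk, add_assoc]
  · intro hx
    refine ⟨x, fun i => le_antisymm (Finset.le_inf fun k _ => ?_) ?_⟩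
    · rcases eq_or_ne i k with rfl | hik
      · simp [h0]
      · exact WithTop.coe_sub_le_iff.1 (hx i k hik)
    · exact (Finset.inf_le (Finset.mem_univ i)).trans_eq (by simp [h0])

theorem sub_le_pathWeight {E : Fin n → Fin n → Prop} {w : Fin n → Fin n → ℝ} {g : Fin n → ℝ}
    (hw : ∀ a b, E a b → g b - g a ≤ w a b) {j i : Fin n} {p : List (Fin n)}
    (hp : IsPathFrom E j i p) : g i - g j ≤ pathWeight w p := by
  obtain ⟨hhead, hlast, hchain⟩ := hp
  induction p generalizing j with
  | nil => simp at hhead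
  | cons a t ih =>
    obtain rfl : a = j := by simpa using hhead
    cases t with
    | nil =>
      obtain rfl : a = i := by simpa using hlast
      simp [pathWeight]
    | cons b t =>
      obtain ⟨hab, hchain⟩ := List.isChain_cons_cons.1 hchain
      have hrest := ih rfl (by simpa using hlast) hchain
      have hsplit : pathWeight w (a :: b :: t) = w a b + pathWeight w (b :: t) := by
        simp [pathWeight]
      linarith [hw a b hab]

theorem noNegCycle_of_mem_wdp (hdiag : ∀ i, 0 ≤ C i i) {x : Fin n → ℝ} (hx : x ∈ wdp C) :
    NoNegCycle C := by
  intro j p hp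
  have := sub_le_pathWeight (w := cw C) (g := x) (fun a b hab => ?_) hp
  · simpa using this
  obtain ⟨c, hc⟩ := WithTop.ne_top_iff_exists.1 hab
  simp only [cw, ← hc, WithTop.untopD_coe]
  rcases eq_or_ne b a with rfl | hba
  · simpa [← hc] using hdiag b
  · exact_mod_cast hc ▸ hx b a hba

end WeightedDigraphPolyhedron

section TropicalPolytope

variable {n m : ℕ} {V : Matrix (Fin n) (Fin m) Trop}

def normalizedColumn (V : Matrix (Fin n) (Fin m) Trop) (k : Fin n) (j : Fin m) : Fin n → Trop :=
  fun i => V i j + ((-(V k j).untopD 0 : ℝ) : Trop)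

theorem normalizedColumn_self {k : Fin n} {j : Fin m} (h : V k j ≠ ⊤) :
    normalizedColumn V k j k = 0 := by
  obtain ⟨a, ha⟩ := WithTop.ne_top_iff_exists.1 h
  simp [normalizedColumn, ← ha]

theorem normalizedColumn_add_normalizedColumn {i k l : Fin n} {j : Fin m} (h : V l j ≠ ⊤) :
    normalizedColumn V l j i + normalizedColumn V k j l = normalizedColumn V k j i := by
  obtain ⟨a, ha⟩ := WithTop.ne_top_iff_exists.1 h
  simp only [normalizedColumn, ← ha, WithTop.untopD_coe, add_assoc, ← WithTop.coe_add]
  congr 2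
  ring

theorem exists_coe_eq_minPlus (hrow : ∀ i, ∃ j, V i j ≠ ⊤) (lam : Fin m → ℝ) :
    ∃ x : Fin n → ℝ, ∀ i, (x i : Trop) = Finset.univ.inf fun j => V i j + (lam j : Trop) := by
  have hfin : ∀ i, (Finset.univ.inf fun j => V i j + (lam j : Trop)) ≠ ⊤ := fun i => by
    obtain ⟨j, hj⟩ := hrow i
    exact ne_top_of_le_ne_top (WithTop.add_ne_top.2 ⟨hj, WithTop.coe_ne_top⟩)
      (Finset.inf_le (Finset.mem_univ j))
  exact ⟨fun i => _, fun i => WithTop.coe_untop _ (hfin i)⟩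

theorem exists_le_normalizedColumn_of_mem_tconvM {z : Fin n → ℝ} (hz : z ∈ tconvM V)
    (i : Fin n) : ∃ j, V i j ≠ ⊤ ∧ ∀ k, ((z k - z i : ℝ) : Trop) ≤ normalizedColumn V i j k := by
  obtain ⟨lam, hlam⟩ := hz
  have hne : (Finset.univ : Finset (Fin m)).Nonempty := by
    by_contra h
    have := hlam i
    rw [Finset.not_nonempty_iff_eq_empty.1 h, Finset.inf_empty] at this
    exact WithTop.coe_ne_top this
  obtain ⟨j, -, hj⟩ := Finset.exists_mem_eq_inf Finset.univ hne fun j => V i j + (lam j : Trop)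
  have hzi : (z i : Trop) = V i j + lam j := (hlam i).trans hj
  have hij : V i j ≠ ⊤ := fun h => by simp [h] at hzi
  obtain ⟨a, ha⟩ := WithTop.ne_top_iff_exists.1 hij
  rw [← ha, ← WithTop.coe_add, WithTop.coe_inj] at hzi
  refine ⟨j, hij, fun k => WithTop.coe_sub_le_iff.2 ?_⟩
  calc (z k : Trop) ≤ V k j + lam j := by rw [hlam k]; exact Finset.inf_le (Finset.mem_univ j)
    _ = normalizedColumn V i j k + z i := by
      rw [normalizedColumn, ← ha, WithTop.untopD_coe, add_assoc, ← WithTop.coe_add, hzi]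
      congr 2
      ring

theorem mem_tconvM_of_forall_exists_le_normalizedColumn (hcol : ∀ j, ∃ i, V i j ≠ ⊤)
    {z : Fin n → ℝ}
    (hz : ∀ i, ∃ j, V i j ≠ ⊤ ∧ ∀ k, ((z k - z i : ℝ) : Trop) ≤ normalizedColumn V i j k) :
    z ∈ tconvM V := by
  have hsupp : ∀ j, (Finset.univ.filter fun k => V k j ≠ ⊤).Nonempty := fun j => by
    obtain ⟨k, hk⟩ := hcol j
    exact ⟨k, Finset.mem_filter.2 ⟨Finset.mem_univ k, hk⟩⟩
  set lam : Fin m → ℝ := fun j => (Finset.univ.filter fun k => V k j ≠ ⊤).sup' (hsupp j)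
    fun k => z k - (V k j).untopD 0
  refine ⟨lam, fun i => le_antisymm (Finset.le_inf fun j _ => ?_) ?_⟩
  · by_cases hij : V i j = ⊤
    · simp [hij]
    have hle : z i - (V i j).untopD 0 ≤ lam j :=
      Finset.le_sup' (fun k => z k - (V k j).untopD 0)
        (Finset.mem_filter.2 ⟨Finset.mem_univ i, hij⟩)
    obtain ⟨a, ha⟩ := WithTop.ne_top_iff_exists.1 hij
    rw [← ha, WithTop.untopD_coe] at hle
    rw [← ha, ← WithTop.coe_add, WithTop.coe_le_coe]
    linarith
  · obtain ⟨j, hij, hj⟩ := hz i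
    obtain ⟨a, ha⟩ := WithTop.ne_top_iff_exists.1 hij
    have hle : lam j ≤ z i - a := Finset.sup'_le _ _ fun k hk => by
      obtain ⟨b, hb⟩ := WithTop.ne_top_iff_exists.1 (Finset.mem_filter.1 hk).2
      have := hj k
      simp only [normalizedColumn, ← ha, ← hb, WithTop.untopD_coe, ← WithTop.coe_add,
        WithTop.coe_le_coe] at this ⊢
      linarith
    calc (Finset.univ.inf fun j => V i j + (lam j : Trop)) ≤ V i j + lam j :=
          Finset.inf_le (Finset.mem_univ j)
      _ ≤ z i := by
        rw [← ha, ← WithTop.coe_add, WithTop.coe_le_coe]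
        linarith

theorem exists_mem_tconvM_inf_le_normalizedColumn (hrow : ∀ i, ∃ j, V i j ≠ ⊤) {k : Fin n}
    {j : Fin m} (hkj : V k j ≠ ⊤) (M : ℝ) :
    ∃ x ∈ tconvM V, x k = 0 ∧ ∀ i, normalizedColumn V k j i ⊓ M ≤ x i := by
  obtain ⟨L, hL⟩ : ∃ L : ℝ, ∀ i j', (M : Trop) ≤ V i j' + L ∧ 0 ≤ V i j' + L := by
    refine (eventually_all.2 fun i => eventually_all.2 fun j' => ?_).exists (f := atTop)
    generalize V i j' = c
    induction c using WithTop.recTopCoe with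
    | top => simp
    | coe c =>
      filter_upwards [eventually_ge_atTop (M - c), eventually_ge_atTop (-c)] with L h1 h2
      norm_cast
      constructor <;> linarith
  set lam : Fin m → ℝ := Function.update (fun _ => L) j (-(V k j).untopD 0)
  have hterm : ∀ i j', V i j' + (lam j' : Trop) =
      if j' = j then normalizedColumn V k j i else V i j' + L := fun i j' => by
    rcases eq_or_ne j' j with rfl | hj'
    · simp [lam, normalizedColumn]
    · simp [lam, hj']
  obtain ⟨x, hx⟩ := exists_coe_eq_minPlus hrow lam
  refine ⟨x, ⟨lam, hx⟩, ?_, fun i => ?_⟩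
  · have hxk : (x k : Trop) = 0 := by
      rw [hx]
      refine le_antisymm ((Finset.inf_le (Finset.mem_univ j)).trans_eq ?_) (Finset.le_inf ?_)
      · rw [hterm, if_pos rfl, normalizedColumn_self hkj]
      · intro j' _
        rw [hterm]
        split_ifs
        · rw [normalizedColumn_self hkj]
        · exact (hL k j').2
    exact_mod_cast hxk
  · rw [hx]
    refine Finset.le_inf fun j' _ => ?_
    rw [hterm]
    split_ifs
    · exact inf_le_left
    · exact inf_le_right.trans (hL i j').1

theorem exists_greatest_normalizedColumn (hV : DoublyRAstic V) (hconv : Convex ℝ (tconvM V))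
    (k : Fin n) : ∃ j, V k j ≠ ⊤ ∧
      ∀ j', V k j' ≠ ⊤ → normalizedColumn V k j' ≤ normalizedColumn V k j := by
  have : Nonempty {j // V k j ≠ ⊤} := let ⟨j, hj⟩ := hV.1 k; ⟨⟨j, hj⟩⟩
  have hX : Convex ℝ {x ∈ tconvM V | x k = 0} :=
    hconv.inter (convex_hyperplane (LinearMap.proj (R := ℝ) (φ := fun _ : Fin n => ℝ) k).isLinear 0)
  obtain ⟨⟨j, hj⟩, hmax⟩ := hX.exists_forall_le_of_covered
    (fun j : {j // V k j ≠ ⊤} => normalizedColumn V k j)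
    (fun x ⟨hx, hxk⟩ => by
      obtain ⟨j, hj, hle⟩ := exists_le_normalizedColumn_of_mem_tconvM hx k
      exact ⟨⟨j, hj⟩, fun i => by simpa [hxk] using hle i⟩)
    (fun ⟨j, hj⟩ M => by
      obtain ⟨x, hx, hxk, hle⟩ := exists_mem_tconvM_inf_le_normalizedColumn hV.1 hj M
      exact ⟨x, ⟨hx, hxk⟩, hle⟩)
  exact ⟨j, hj, fun j' hj' => hmax ⟨j', hj'⟩⟩

def normalizedColumns (V : Matrix (Fin n) (Fin m) Trop) (g : Fin n → Fin m) :
    Matrix (Fin n) (Fin n) Trop :=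
  fun i k => normalizedColumn V k (g k) i

theorem normalizedColumns_triangle {g : Fin n → Fin m}
    (hmax : ∀ k j, V k j ≠ ⊤ → normalizedColumn V k j ≤ normalizedColumn V k (g k))
    (i l k : Fin n) :
    normalizedColumns V g i k ≤ normalizedColumns V g i l + normalizedColumns V g l k := by
  by_cases hlk : V l (g k) = ⊤
  · simp [normalizedColumns, normalizedColumn, hlk]
  calc normalizedColumns V g i k
      = normalizedColumn V l (g k) i + normalizedColumn V k (g k) l :=
        (normalizedColumn_add_normalizedColumn hlk).symm
    _ ≤ normalizedColumns V g i l + normalizedColumns V g l k :=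
        add_le_add (hmax l (g k) hlk i) le_rfl

theorem tconvM_eq_wdp_normalizedColumns (hV : DoublyRAstic V) {g : Fin n → Fin m}
    (hg : ∀ k, V k (g k) ≠ ⊤)
    (hmax : ∀ k j, V k j ≠ ⊤ → normalizedColumn V k j ≤ normalizedColumn V k (g k)) :
    tconvM V = wdp (normalizedColumns V g) := by
  ext z
  constructor
  · intro hz a b _
    obtain ⟨j, hj, hle⟩ := exists_le_normalizedColumn_of_mem_tconvM hz b
    exact (hle a).trans (hmax b j hj a)
  · intro hz
    refine mem_tconvM_of_forall_exists_le_normalizedColumn hV.2 fun i => ⟨g i, hg i, fun k => ?_⟩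
    rcases eq_or_ne k i with rfl | hki
    · simp [normalizedColumn_self (hg k)]
    · exact hz k i hki

end TropicalPolytope

/-- A tropical polytope `P ⊆ ℝ^n/ℝ𝟙` is a polytrope (classically convex)
iff `P = tconv(C*) = Q(C)` for some `C ∈ T^{n×n}` without negative cycles. -/
theorem stmt2 {n m : ℕ} (V : Matrix (Fin n) (Fin m) Trop) (hV : DoublyRAstic V) :
    Convex ℝ (tconvM V) ↔
      ∃ C : Matrix (Fin n) (Fin n) Trop, NoNegCycle C ∧
        tconvM V = tconvM (kleene C) ∧ tconvM (kleene C) = wdp C := by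
  constructor
  · intro hconv
    choose g hg hmax using exists_greatest_normalizedColumn hV hconv
    have h0 : ∀ i, normalizedColumns V g i i = 0 := fun i => normalizedColumn_self (hg i)
    have htri := normalizedColumns_triangle hmax
    have hVC := tconvM_eq_wdp_normalizedColumns hV hg hmax
    obtain ⟨x, hx⟩ := exists_coe_eq_minPlus hV.1 0
    have hxV : x ∈ tconvM V := ⟨0, hx⟩
    refine ⟨normalizedColumns V g, noNegCycle_of_mem_wdp (fun i => (h0 i).ge) (hVC ▸ hxV),
      ?_, ?_⟩ <;> rw [kleene_eq_self h0 htri, tconvM_eq_wdp h0 htri]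
    exact hVC
  · rintro ⟨C, -, hVC, hCQ⟩
    rw [hVC, hCQ]
    exact convex_wdp C
end
end

section
/- Let G = ([n], E) be a DAG with weights w ∈ ℝ^E. The weighted transitive reduction G^♭_w exists and is unique, and it equals the union over all nodes s ∈ [n] of the intersection of all shortest-path trees at s for w; that is, an edge of G belongs to G^♭_w if and only if there is a node s such that the edge belongs to every shortest-path tree at s. -/
open scoped Classical
noncomputable section

/-- `T` is a shortest-path tree at source `s` in `(E, w)`: a subgraph of `E` spanning the
set of vertices reachable from `s`, with a unique `T`-path from `s` to each reachable
vertex, such that no edge `j → i` of `E` satisfies `w(j→i) + p_j < p_i`, where `p_v` is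
the weight of the `T`-path from `s` to `v`. -/
def IsSPTree {n : ℕ} (E : Fin n → Fin n → Prop) (w : Fin n → Fin n → ℝ) (s : Fin n)
    (T : Fin n → Fin n → Prop) : Prop :=
  (∀ a b, T a b → E a b) ∧
  (∀ a b, T a b → Reaches E s a) ∧
  (∀ v, Reaches E s v → ∃! p, IsPathFrom T s v p) ∧
  (∀ j i, E j i → Reaches E s j →
    ∀ pj pi, IsPathFrom T s j pj → IsPathFrom T s i pi →
      ¬ (w j i + pathWeight w pj < pathWeight w pi))

/-! If `j → i` is the unique lightest path from `j` to `i`, every shortest-path tree at `j`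
contains it: the tree path to `i` is no heavier than the edge, hence is the edge.
Conversely, let `q ≠ [j, i]` be a path from `j` to `i` no heavier than `j → i`, and fix a source
`s`. In a DAG shortest-path distances from `s` are attained, and choosing for every reachable
`v ≠ s` a parent along an edge that is tight for these distances yields a shortest-path tree. If
`j → i` is tight then so is the last edge of `q`, so `i` can be given a parent other than `j`. -/

variable {n : ℕ} {R E : Fin n → Fin n → Prop} {w : Fin n → Fin n → ℝ} {a b c s : Fin n}
  {p q : List (Fin n)}

namespace IsPathFrom

theorem single (a : Fin n) : IsPathFrom R a a [a] :=
  ⟨rfl, rfl, List.isChain_singleton a⟩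

theorem ne_nil (hp : IsPathFrom R a b p) : p ≠ [] := by
  rintro rfl
  simp [IsPathFrom] at hp

theorem concat (hp : IsPathFrom R a b p) (e : R b c) : IsPathFrom R a c (p ++ [c]) := by
  obtain ⟨hhead, hlast, hchain⟩ := hp
  refine ⟨by simp [List.head?_append, hhead], by simp,
    List.isChain_append.mpr ⟨hchain, List.isChain_singleton c, ?_⟩⟩
  simp [hlast, e]

theorem mono {R' : Fin n → Fin n → Prop} (h : ∀ x y, R x y → R' x y)
    (hp : IsPathFrom R a b p) : IsPathFrom R' a b p :=
  ⟨hp.1, hp.2.1, hp.2.2.imp fun x y => h x y⟩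

theorem eq_singleton_or_concat (hp : IsPathFrom R a c p) :
    (a = c ∧ p = [a]) ∨ ∃ b p', p = p' ++ [c] ∧ IsPathFrom R a b p' ∧ R b c := by
  obtain ⟨hhead, hlast, hchain⟩ := hp
  rcases List.eq_nil_or_concat p with rfl | ⟨L, x, rfl⟩
  · simp at hhead
  obtain rfl : c = x := by simpa using hlast.symm
  rcases List.eq_nil_or_concat L with rfl | ⟨L', y, rfl⟩
  · obtain rfl : a = c := by simpa using hhead.symm
    exact Or.inl ⟨rfl, rfl⟩
  simp only [List.concat_eq_append] at hhead hchain ⊢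
  obtain ⟨hL, -, hlink⟩ := List.isChain_append.mp hchain
  refine Or.inr ⟨y, L' ++ [y], rfl, ⟨?_, by simp, hL⟩, hlink y (by simp) c (by simp)⟩
  rwa [List.head?_append_of_ne_nil _ (by simp)] at hhead

theorem concat_induction {motive : ∀ b p, IsPathFrom R a b p → Prop}
    (single : motive a [a] (single a))
    (concat : ∀ b c p (hp : IsPathFrom R a b p) (e : R b c), motive b p hp →
      motive c (p ++ [c]) (hp.concat e))
    (hp : IsPathFrom R a b p) : motive b p hp := by
  induction hlen : p.length using Nat.strong_induction_on generalizing b p with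
  | _ k ih =>
    rcases hp.eq_singleton_or_concat with ⟨rfl, rfl⟩ | ⟨b', p', rfl, hp', e⟩
    · exact single
    · exact concat b' b p' hp' e (ih p'.length (by simp [← hlen]) hp' rfl)

end IsPathFrom

theorem pathWeight_append_singleton (hp : p.getLast? = some b) (c : Fin n) :
    pathWeight w (p ++ [c]) = pathWeight w p + w b c := by
  induction p with
  | nil => simp at hp
  | cons x p ih =>
    cases p with
    | nil =>
      obtain rfl : x = b := by simpa using hp
      simp [pathWeight]
    | cons y p =>
      rw [List.getLast?_cons_cons] at hp
      change w x y + pathWeight w (y :: p ++ [c]) = w x y + pathWeight w (y :: p) + w b c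
      rw [ih hp]
      ring

theorem IsPathFrom.pathWeight_eq_sub {d : Fin n → ℝ}
    (htight : ∀ x y, R x y → d x + w x y = d y) (hp : IsPathFrom R a b p) : pathWeight w p = d b - d a := by
  induction hp using IsPathFrom.concat_induction with
  | single => simp [pathWeight]
  | concat b c p hp e ih =>
    rw [pathWeight_append_singleton hp.2.1, ih, ← htight b c e]
    ring

theorem IsPathFrom.eq_of_pred_unique (hpred : ∀ u u' v, R u v → R u' v → u = u')
    (hloop : ∀ p, IsPathFrom R a a p → p = [a]) (hp : IsPathFrom R a b p)
    (hq : IsPathFrom R a b q) : p = q := by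
  induction hp using IsPathFrom.concat_induction generalizing q with
  | single => exact (hloop q hq).symm
  | concat b c p hp e ih =>
    rcases hq.eq_singleton_or_concat with ⟨rfl, rfl⟩ | ⟨b', q', rfl, hq', e'⟩
    · exact hloop _ (hp.concat e)
    · rw [ih (hpred b b' c e e' ▸ hq')]

theorem Reaches.refl (a : Fin n) : Reaches E a a := ⟨[a], .single a⟩

theorem Reaches.tail (ha : Reaches E s a) (e : E a b) : Reaches E s b :=
  ⟨_, ha.choose_spec.concat e⟩

theorem Reaches.trans_isPathFrom (ha : Reaches E s a) (hp : IsPathFrom E a b p) :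
    Reaches E s b := by
  induction hp using IsPathFrom.concat_induction with
  | single => exact ha
  | concat b c p _ e ih => exact ih.tail e

theorem Reaches.of_reflTransGen (h : Relation.ReflTransGen E a b) : Reaches E a b := by
  induction h with
  | refl => exact .refl a
  | tail _ e ih => exact ih.tail e

namespace IsDAG

theorem not_rel_of_isPathFrom (hdag : IsDAG E) (hp : IsPathFrom E a b p) : ¬ E b a := fun e => by
  have hlen := hdag a _ (hp.concat e)
  simp [hp.ne_nil] at hlen

theorem eq_singleton (hdag : IsDAG E) (hp : IsPathFrom E a a p) : p = [a] := by
  rcases hp.eq_singleton_or_concat with ⟨-, rfl⟩ | ⟨b, p', -, hp', e⟩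
  · rfl
  · exact absurd e (hdag.not_rel_of_isPathFrom hp')

theorem wellFounded_transGen (hdag : IsDAG E) : WellFounded (Relation.TransGen E) :=
  have : Std.Irrefl (Relation.TransGen E) := ⟨fun a h => by
    obtain ⟨b, hab, e⟩ := Relation.TransGen.tail'_iff.mp h
    obtain ⟨p, hp⟩ := Reaches.of_reflTransGen hab
    exact hdag.not_rel_of_isPathFrom hp e⟩
  Finite.wellFounded_of_trans_of_irrefl _

theorem nodup_of_isPathFrom (hdag : IsDAG E) (hp : IsPathFrom E a b p) : p.Nodup := by
  have hpair : p.Pairwise (Relation.TransGen E) :=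
    List.isChain_iff_pairwise.mp (hp.2.2.imp fun _ _ => Relation.TransGen.single)
  exact hpair.imp fun h => by rintro rfl; exact hdag.wellFounded_transGen.irrefl.irrefl _ h

theorem finite_setOf_isPathFrom (hdag : IsDAG E) (a b : Fin n) :
    {p | IsPathFrom E a b p}.Finite :=
  (List.finite_length_le (Fin n) n).subset fun _ hp => by
    simpa using (hdag.nodup_of_isPathFrom hp).length_le_card

end IsDAG

/-- Attained when `v` is reachable from `s` in a DAG; the junk value `sInf ∅ = 0` otherwise. -/
def pathDist (E : Fin n → Fin n → Prop) (w : Fin n → Fin n → ℝ) (s v : Fin n) : ℝ :=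
  sInf (pathWeight w '' {p | IsPathFrom E s v p})

theorem pathDist_le_pathWeight (hdag : IsDAG E) (hp : IsPathFrom E s b p) :
    pathDist E w s b ≤ pathWeight w p :=
  csInf_le ((hdag.finite_setOf_isPathFrom s b).image _).bddBelow ⟨p, hp, rfl⟩

theorem exists_pathWeight_eq_pathDist (hdag : IsDAG E) (hb : Reaches E s b) :
    ∃ p, IsPathFrom E s b p ∧ pathWeight w p = pathDist E w s b :=
  (Set.Nonempty.image _ hb).csInf_mem ((hdag.finite_setOf_isPathFrom s b).image _)

theorem pathDist_le_add_weight (hdag : IsDAG E) (ha : Reaches E s a) (e : E a b) :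
    pathDist E w s b ≤ pathDist E w s a + w a b := by
  obtain ⟨p, hp, hpw⟩ := exists_pathWeight_eq_pathDist (w := w) hdag ha
  calc pathDist E w s b ≤ pathWeight w (p ++ [b]) := pathDist_le_pathWeight hdag (hp.concat e)
    _ = pathDist E w s a + w a b := by rw [pathWeight_append_singleton hp.2.1, hpw]

theorem pathDist_le_add_pathWeight (hdag : IsDAG E) (ha : Reaches E s a)
    (hp : IsPathFrom E a b p) :
    pathDist E w s b ≤ pathDist E w s a + pathWeight w p := by
  induction hp using IsPathFrom.concat_induction with
  | single => simp [pathWeight]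
  | concat b c p hp e ih =>
    have := pathDist_le_add_weight (w := w) hdag (ha.trans_isPathFrom hp) e
    rw [pathWeight_append_singleton hp.2.1]
    linarith

theorem exists_tight_pred (hdag : IsDAG E) (hb : Reaches E s b) (hbs : b ≠ s) :
    ∃ a, E a b ∧ Reaches E s a ∧ pathDist E w s a + w a b = pathDist E w s b := by
  obtain ⟨p, hp, hpw⟩ := exists_pathWeight_eq_pathDist (w := w) hdag hb
  rcases hp.eq_singleton_or_concat with ⟨rfl, -⟩ | ⟨a, p', rfl, hp', e⟩
  · exact absurd rfl hbs
  have hle := pathDist_le_pathWeight (w := w) hdag hp'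
  have hge := pathDist_le_add_weight (w := w) hdag ⟨p', hp'⟩ e
  rw [pathWeight_append_singleton hp'.2.1] at hpw
  exact ⟨a, e, ⟨p', hp'⟩, by linarith⟩

theorem exists_tight_pred_ne (hdag : IsDAG E) {i j : Fin n} (hi : Reaches E s i) (his : i ≠ s)
    (hq : IsPathFrom E j i q) (hne : q ≠ [j, i]) (hle : pathWeight w q ≤ w j i) :
    ∃ a, a ≠ j ∧ E a i ∧ Reaches E s a ∧ pathDist E w s a + w a i = pathDist E w s i := by
  obtain ⟨a, e, ha, htight⟩ := exists_tight_pred (w := w) hdag hi his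
  rcases eq_or_ne a j with rfl | haj
  swap
  · exact ⟨a, haj, e, ha, htight⟩
  rcases hq.eq_singleton_or_concat with ⟨rfl, -⟩ | ⟨u, q', rfl, hq', e'⟩
  · exact (hdag.not_rel_of_isPathFrom (.single a) e).elim
  have hua : u ≠ a := by
    rintro rfl
    exact hne (by rw [hdag.eq_singleton hq']; rfl)
  -- `j → i` is tight, so the last edge `u → i` of the no heavier path `q` is tight too
  have hu := ha.trans_isPathFrom hq'
  have h1 := pathDist_le_add_weight (w := w) hdag hu e'
  have h2 := pathDist_le_add_pathWeight (w := w) hdag ha hq'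
  rw [pathWeight_append_singleton hq'.2.1] at hle
  exact ⟨u, hua, e', hu, by linarith⟩

theorem isSPTree_of_parent (hdag : IsDAG E) {d : Fin n → ℝ} {par : Fin n → Fin n}
    (hfeas : ∀ a b, Reaches E s a → E a b → d b ≤ d a + w a b)
    (hpar : ∀ v, Reaches E s v → v ≠ s →
      E (par v) v ∧ Reaches E s (par v) ∧ d (par v) + w (par v) v = d v) :
    IsSPTree E w s (fun u v => v ≠ s ∧ Reaches E s v ∧ par v = u) := by
  set T : Fin n → Fin n → Prop := fun u v => v ≠ s ∧ Reaches E s v ∧ par v = u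
  have hTE : ∀ u v, T u v → E u v := by
    rintro _ v ⟨hvs, hv, rfl⟩
    exact (hpar v hv hvs).1
  have htight : ∀ u v, T u v → d u + w u v = d v := by
    rintro _ v ⟨hvs, hv, rfl⟩
    exact (hpar v hv hvs).2.2
  have hexists : ∀ v, Reaches E s v → ∃ p, IsPathFrom T s v p := by
    intro v
    induction v using hdag.wellFounded_transGen.induction with
    | _ v ih =>
      intro hv
      by_cases hvs : v = s
      · subst hvs
        exact ⟨_, .single _⟩
      obtain ⟨e, hpv, -⟩ := hpar v hv hvs
      obtain ⟨p, hp⟩ := ih (par v) (.single e) hpv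
      exact ⟨p ++ [v], hp.concat ⟨hvs, hv, rfl⟩⟩
  refine ⟨hTE, ?_, fun v hv => ?_, ?_⟩
  · rintro _ v ⟨hvs, hv, rfl⟩
    exact (hpar v hv hvs).2.1
  · obtain ⟨p, hp⟩ := hexists v hv
    have hpred : ∀ u u' v, T u v → T u' v → u = u' := by
      rintro _ _ _ ⟨-, -, rfl⟩ ⟨-, -, rfl⟩
      rfl
    exact ⟨p, hp, fun q hq =>
      hq.eq_of_pred_unique hpred (fun p hp => hdag.eq_singleton (hp.mono hTE)) hp⟩
  · intro a b e ha pa pb hpa hpb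
    rw [hpa.pathWeight_eq_sub htight, hpb.pathWeight_eq_sub htight]
    linarith [hfeas a b ha e]

theorem exists_isSPTree_not_rel (hdag : IsDAG E) {i j : Fin n} (hq : IsPathFrom E j i q)
    (hne : q ≠ [j, i]) (hle : pathWeight w q ≤ w j i) (s : Fin n) :
    ∃ T, IsSPTree E w s T ∧ ¬ T j i := by
  have hchoice : ∀ v, ∃ u, Reaches E s v → v ≠ s →
      (E u v ∧ Reaches E s u ∧ pathDist E w s u + w u v = pathDist E w s v) ∧
        (v = i → u ≠ j) := by
    intro v
    by_cases hv : Reaches E s v ∧ v ≠ s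
    · by_cases hvi : v = i
      · subst hvi
        obtain ⟨u, huj, hu⟩ := exists_tight_pred_ne hdag hv.1 hv.2 hq hne hle
        exact ⟨u, fun _ _ => ⟨hu, fun _ => huj⟩⟩
      · obtain ⟨u, hu⟩ := exists_tight_pred (w := w) hdag hv.1 hv.2
        exact ⟨u, fun _ _ => ⟨hu, fun h => absurd h hvi⟩⟩
    · exact ⟨v, fun h1 h2 => absurd ⟨h1, h2⟩ hv⟩
  choose par hpar using hchoice
  refine ⟨_, isSPTree_of_parent hdag (fun a b ha e => pathDist_le_add_weight hdag ha e)
    (fun v hv hvs => (hpar v hv hvs).1), ?_⟩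
  rintro ⟨his, hi, hij⟩
  exact (hpar i hi his).2 rfl hij

theorem IsSPTree.rel_of_inWTR {T : Fin n → Fin n → Prop} {i j : Fin n} (hT : IsSPTree E w j T)
    (h : InWTR E w j i) : T j i := by
  obtain ⟨hTE, -, hpaths, hshort⟩ := hT
  obtain ⟨hji, hmin⟩ := h
  obtain ⟨p, hp, -⟩ := hpaths i ⟨[j, i], (IsPathFrom.single j).concat hji⟩
  have hnot := hshort j i hji (.refl j) [j] p (.single j) hp
  by_cases hpji : p = [j, i]
  · exact List.isChain_pair.mp (hpji ▸ hp.2.2)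
  · exact absurd (by simpa [pathWeight] using hmin p (hp.mono hTE) hpji) hnot

/-- The weighted transitive reduction `G^♭_w` equals the union over `s`
of the intersection of all shortest-path trees at `s`: an edge of `G` belongs to `G^♭_w`
iff there is a node `s` such that the edge belongs to every shortest-path tree at `s`. -/
theorem stmt3 {n : ℕ} (E : Fin n → Fin n → Prop) (hdag : IsDAG E)
    (w : Fin n → Fin n → ℝ) (j i : Fin n) :
    InWTR E w j i ↔
      E j i ∧ ∃ s : Fin n, ∀ T : Fin n → Fin n → Prop, IsSPTree E w s T → T j i := by
  constructor
  · intro h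
    exact ⟨h.1, j, fun T hT => hT.rel_of_inWTR h⟩
  · rintro ⟨hji, s, hs⟩
    refine ⟨hji, fun q hq hne => ?_⟩
    by_contra! hle
    obtain ⟨T, hT, hTji⟩ := exists_isSPTree_not_rel hdag hq hne hle s
    exact hTji (hs T hT)
end
end

section
/- Let G = ([n], E) be a DAG with weights w ∈ ℝ^E and weight matrix C, and fix an edge j→i ∈ E. For t > 0 let C_t denote the matrix obtained from C by replacing the entry c_ij with c_ij + t. Then the following are equivalent: (1) Q(C) = Q(C_t) for all t > 0; (2) Q(C) = Q(C_t) for some t > 0; (3) j→i ∉ G^♭_w. -/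
open scoped Classical
noncomputable section

/-- The matrix `C_t` obtained from `C` by replacing the entry `c_ij` with `c_ij + t`. -/
def bump {n : ℕ} (C : Matrix (Fin n) (Fin n) Trop) (i j : Fin n) (t : ℝ) :
    Matrix (Fin n) (Fin n) Trop :=
  fun a b => if a = i ∧ b = j then C i j + (t : Trop) else C a b

/-! ### Auxiliary lemmas -/

section AuxLemmas

variable {n : ℕ} {E : Fin n → Fin n → Prop}

lemma no_self_loop (hdag : IsDAG E) (a : Fin n) : ¬ E a a := by
  intro h
  have := hdag a [a, a] ⟨rfl, rfl, by simp [List.Chain', h]⟩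
  simp at this

lemma chain'_nodup (hdag : IsDAG E) : ∀ {p : List (Fin n)}, p.Chain' E → p.Nodup := by
  intro p
  induction p with
  | nil => simp
  | cons a l ih =>
    intro hc
    refine List.nodup_cons.2 ⟨?_, ih hc.tail⟩
    intro ha
    obtain ⟨k, hk, hget⟩ := List.mem_iff_getElem.1 ha
    have hq : IsPathFrom E a a ((a :: l).take (k + 2)) := by
      refine ⟨?_, ?_, hc.take _⟩
      · rw [List.take_succ_cons]; rfl
      · rw [List.take_succ_cons]
        have hlen : (l.take (k + 1)).length = k + 1 := by
          simp [List.length_take]; omega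
        have hne : l.take (k+1) ≠ [] := by
          intro h; rw [h] at hlen; simp at hlen
        rw [List.getLast?_eq_getLast (by simp), List.getLast_eq_getElem]
        simp only [List.length_cons, hlen, Nat.add_sub_cancel]
        rw [List.getElem_cons_succ]
        have : (l.take (k+1))[k]'(by omega) = l[k] := List.getElem_take ..
        rw [this, hget]
    have := hdag a _ hq
    simp only [List.length_take, List.length_cons] at this
    omega

lemma path_self (hdag : IsDAG E) {v : Fin n} {p : List (Fin n)}
    (hp : IsPathFrom E v v p) : p = [v] := by
  have hlen := hdag v p hp
  obtain ⟨h1, h2, h3⟩ := hp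
  match p, hlen, h1 with
  | [x], _, h1 => simp_all
  | [], _, h1 => simp at h1

lemma paths_finite (hdag : IsDAG E) (u v : Fin n) :
    {p : List (Fin n) | IsPathFrom E u v p}.Finite := by
  apply (List.finite_length_le (Fin n) n).subset
  intro p hp
  have hn : p.Nodup := chain'_nodup hdag hp.2.2
  simpa using hn.length_le_card

lemma pathWeight_singleton (w : Fin n → Fin n → ℝ) (a : Fin n) :
    pathWeight w [a] = 0 := by simp [pathWeight]

lemma pathWeight_cons (w : Fin n → Fin n → ℝ) (a b : Fin n) (l : List (Fin n)) :
    pathWeight w (a :: b :: l) = w a b + pathWeight w (b :: l) := by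
  simp [pathWeight]

lemma pathWeight_pair (w : Fin n → Fin n → ℝ) (a b : Fin n) :
    pathWeight w [a, b] = w a b := by simp [pathWeight]

lemma isPathFrom_pair {j i : Fin n} (he : E j i) : IsPathFrom E j i [j, i] :=
  ⟨rfl, rfl, by simp [List.Chain', he]⟩

lemma isPathFrom_single (v : Fin n) : IsPathFrom E v v [v] := ⟨rfl, rfl, by simp [List.Chain']⟩

lemma isPathFrom_cons {u v b : Fin n} {p : List (Fin n)}
    (hp : IsPathFrom E u v p) (hE : E b u) : IsPathFrom E b v (b :: p) := by
  obtain ⟨h1, h2, h3⟩ := hp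
  have hne : p ≠ [] := by intro h; rw [h] at h1; simp at h1
  refine ⟨rfl, ?_, List.isChain_cons.2 ⟨fun y hy => ?_, h3⟩⟩
  · obtain ⟨q, qs, rfl⟩ := List.exists_cons_of_ne_nil hne
    rwa [List.getLast?_cons_cons]
  · rw [h1] at hy
    simp only [Option.mem_def, Option.some_inj] at hy
    subst hy; exact hE

lemma pathWeight_mono {w w' : Fin n → Fin n → ℝ} (h : ∀ a b, w a b ≤ w' a b)
    (p : List (Fin n)) : pathWeight w p ≤ pathWeight w' p := by
  apply List.sum_le_sum
  intro q _
  exact h q.1 q.2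

lemma wdp_mono {C D : Matrix (Fin n) (Fin n) Trop} (h : ∀ a b, C a b ≤ D a b) :
    wdp C ⊆ wdp D := fun x hx a b hab => (hx a b hab).trans (h a b)

lemma coe_cw {C : Matrix (Fin n) (Fin n) Trop} {a b : Fin n} (h : C a b ≠ ⊤) :
    C a b = ((cw C b a : ℝ) : Trop) := by
  obtain ⟨r, hr⟩ := WithTop.ne_top_iff_exists.1 h
  rw [← hr]
  simp [cw, ← hr]

/-- If `p` is a path from `j` to `i` in a DAG with `p ≠ [j,i]`, then the pair `(j,i)`
does not occur as a consecutive pair of `p`. -/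
lemma edge_not_mem_zip (hdag : IsDAG E) {j i : Fin n} {p : List (Fin n)}
    (hp : IsPathFrom E j i p) (hne : p ≠ [j, i]) : (j, i) ∉ p.zip p.tail := by
  intro hmem
  have hnd : p.Nodup := chain'_nodup hdag hp.2.2
  obtain ⟨k, hk, hget⟩ := List.mem_iff_getElem.1 hmem
  have hklen : k < min p.length p.tail.length := by simpa [List.length_zip] using hk
  have hklt : k < p.length := lt_of_lt_of_le hklen (min_le_left _ _)
  have hk1 : k + 1 < p.length := by
    have := lt_of_lt_of_le hklen (min_le_right _ _)
    simp [List.length_tail] at this; omega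
  rw [List.getElem_zip] at hget
  have hpk : p[k] = j := congrArg Prod.fst hget
  have hpk1 : p[k + 1] = i := by
    have h2 := congrArg Prod.snd hget
    simpa [List.getElem_tail] using h2
  have hpne : p ≠ [] := by intro h; subst h; simp at hklt
  have hp0 : p[0]'(by omega) = j := by
    have h1 := hp.1
    rw [List.head?_eq_head hpne, Option.some_inj] at h1
    rw [← h1, List.head_eq_getElem]
  have hk0 : k = 0 := hnd.getElem_inj_iff.1 (by rw [hpk, hp0])
  have hplast : p[p.length - 1]'(by omega) = i := by
    have h2 := hp.2.1
    rw [List.getLast?_eq_getLast hpne, Option.some_inj] at h2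
    rw [← h2, List.getLast_eq_getElem]
  have hk1eq : k + 1 = p.length - 1 := hnd.getElem_inj_iff.1 (by rw [hpk1, hplast])
  subst hk0
  have hlen2 : p.length = 2 := by omega
  apply hne
  apply List.ext_getElem (by simp [hlen2])
  intro m hm hm2
  have hm' : m < 2 := by simpa using hm2
  interval_cases m
  · rw [hp0]; rfl
  · rw [hpk1]; rfl

/-- Telescoping a path: if `x` satisfies all edge constraints, then
`x v - x u` is at most the weight of any path from `u` to `v`. -/
lemma telescope {x : Fin n → ℝ} {W : Fin n → Fin n → ℝ}
    (hstep : ∀ a b, E a b → x b - x a ≤ W a b) :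
    ∀ (p : List (Fin n)) (u v : Fin n), IsPathFrom E u v p →
      x v - x u ≤ pathWeight W p := by
  intro p
  induction p with
  | nil => intro u v hp; simp [IsPathFrom] at hp
  | cons a l ih =>
    intro u v hp
    obtain ⟨h1, h2, h3⟩ := hp
    simp only [List.head?_cons, Option.some_inj] at h1
    subst h1
    match l, h2, h3 with
    | [], h2, h3 =>
      simp only [List.getLast?_singleton, Option.some_inj] at h2
      subst h2
      simp [pathWeight_singleton]
    | b :: l', h2, h3 =>
      have hE : E a b := (List.isChain_cons_cons.1 h3).1
      have htail : IsPathFrom E b v (b :: l') := by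
        refine ⟨rfl, ?_, (List.isChain_cons_cons.1 h3).2⟩
        rwa [List.getLast?_cons_cons] at h2
      have := ih b v htail
      have hs := hstep a b hE
      rw [pathWeight_cons]
      linarith

end AuxLemmas
/-- For an edge `j → i` of a weighted DAG `(G, w)` with weight matrix
`C`, the following are equivalent: `Q(C) = Q(C_t)` for all `t > 0`; `Q(C) = Q(C_t)` for
some `t > 0`; `j → i ∉ G^♭_w`. -/
theorem stmt4 {n : ℕ} (E : Fin n → Fin n → Prop) (C : Matrix (Fin n) (Fin n) Trop)
    (hdag : IsDAG E) (hsupp : SupportedOn C E) (i j : Fin n) (he : E j i) :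
    ((∀ t : ℝ, 0 < t → wdp C = wdp (bump C i j t)) ↔ ¬ InWTR E (cw C) j i) ∧
    ((∃ t : ℝ, 0 < t ∧ wdp C = wdp (bump C i j t)) ↔ ¬ InWTR E (cw C) j i) := by
  have hij : i ≠ j := fun h => no_self_loop hdag i (by rw [h] at he ⊢; exact he)
  have hCij : C i j ≠ ⊤ := (hsupp.2 i j hij).2 he
  set w := cw C with hw
  have hCeq : C i j = ((w j i : ℝ) : Trop) := coe_cw hCij
  have hbump_ge : ∀ t : ℝ, 0 ≤ t → ∀ a b, C a b ≤ bump C i j t a b := by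
    intro t ht a b
    unfold bump
    split
    · next h =>
      obtain ⟨rfl, rfl⟩ := h
      nth_rewrite 1 [← add_zero (C a b)]
      exact add_le_add_right (by exact_mod_cast ht) _
    · exact le_rfl
  -- Direction A : not in WTR → polyhedra equal for all t > 0
  have keyA : ¬ InWTR E w j i → ∀ t : ℝ, 0 < t → wdp C = wdp (bump C i j t) := by
    intro hni t ht
    apply Set.Subset.antisymm (wdp_mono (hbump_ge t ht.le))
    intro x hx a0 b0 hab
    by_cases hcase : a0 = i ∧ b0 = j
    · obtain ⟨h1, h2⟩ := hcase
      rw [h1, h2]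
      rw [InWTR, not_and_or] at hni
      rcases hni with h | h
      · exact absurd he h
      push_neg at h
      obtain ⟨p, hp, hpne, hple⟩ := h
      have hstep : ∀ a b, E a b → x b - x a ≤ cw (bump C i j t) a b := by
        intro a b hab'
        have hba : b ≠ a := fun hh => no_self_loop hdag a (hh ▸ hab')
        have hfin : bump C i j t b a ≠ ⊤ := by
          unfold bump
          split
          · next hh => exact WithTop.add_ne_top.2 ⟨hCij, WithTop.coe_ne_top⟩
          · next hh => exact (hsupp.2 b a hba).2 hab'
        have hxba := hx b a hba
        rw [coe_cw hfin] at hxba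
        exact_mod_cast hxba
      have htel := telescope hstep p j i hp
      have hWeq : pathWeight (cw (bump C i j t)) p = pathWeight w p := by
        unfold pathWeight
        apply congrArg
        apply List.map_congr_left
        intro q hq
        have hqne : q ≠ (j, i) := fun hh => edge_not_mem_zip hdag hp hpne (hh ▸ hq)
        show cw (bump C i j t) q.1 q.2 = w q.1 q.2
        rw [hw]
        unfold cw bump
        rw [if_neg (by rintro ⟨hh1, hh2⟩; exact hqne (Prod.ext hh2 hh1))]
      rw [hWeq] at htel
      rw [hCeq]
      have hfinal : x i - x j ≤ w j i := le_trans htel hple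
      exact_mod_cast hfinal
    · have hbeq : bump C i j t a0 b0 = C a0 b0 := by unfold bump; rw [if_neg hcase]
      rw [← hbeq]
      exact hx a0 b0 hab
  -- Direction B : in WTR → polyhedra differ for all t > 0
  have keyB : InWTR E w j i → ∀ t : ℝ, 0 < t → wdp C ≠ wdp (bump C i j t) := by
    intro hwtr t ht heq
    set W' := cw (bump C i j t) with hW'
    have hW'ji : W' j i = w j i + t := by
      have hb : bump C i j t i j = ((w j i + t : ℝ) : Trop) := by
        unfold bump
        rw [if_pos ⟨rfl, rfl⟩, hCeq, ← WithTop.coe_add]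
      rw [hW']
      unfold cw
      rw [hb]
      rfl
    have hW'eq : ∀ a b, ¬ (b = i ∧ a = j) → W' a b = w a b := by
      intro a b hcase
      rw [hW', hw]
      unfold cw bump
      rw [if_neg hcase]
    have hW'ge : ∀ a b, w a b ≤ W' a b := by
      intro a b
      by_cases hcase : b = i ∧ a = j
      · obtain ⟨hh1, hh2⟩ := hcase
        rw [hh1, hh2, hW'ji]
        linarith
      · rw [hW'eq a b hcase]
    -- global minimum of all path weights
    set AllW : Set ℝ := ⋃ u : Fin n, ⋃ v : Fin n,
      pathWeight W' '' {p | IsPathFrom E u v p} with hAllW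
    have hAllWfin : AllW.Finite :=
      Set.finite_iUnion fun u => Set.finite_iUnion fun v => (paths_finite hdag u v).image _
    set Wmin := sInf AllW with hWmin
    have hWminle : ∀ u v p, IsPathFrom E u v p → Wmin ≤ pathWeight W' p := by
      intro u v p hp
      exact csInf_le hAllWfin.bddBelow
        (Set.mem_iUnion.2 ⟨u, Set.mem_iUnion.2 ⟨v, ⟨p, hp, rfl⟩⟩⟩)
    -- minimal weight d0 of a path from j to i (in the bumped weights)
    set D : Set ℝ := pathWeight W' '' {p | IsPathFrom E j i p} with hD
    have hDne : D.Nonempty := ⟨_, ⟨[j, i], isPathFrom_pair he, rfl⟩⟩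
    have hDfin : D.Finite := (paths_finite hdag j i).image _
    set d0 := sInf D with hd0
    have hd0mem : d0 ∈ D := hDne.csInf_mem hDfin
    have hd0le : ∀ p, IsPathFrom E j i p → d0 ≤ pathWeight W' p :=
      fun p hp => csInf_le hDfin.bddBelow ⟨p, hp, rfl⟩
    have hd0gt : w j i < d0 := by
      obtain ⟨p0, hp0, hval⟩ := hd0mem
      rw [← hval]
      by_cases hpe : p0 = [j, i]
      · rw [hpe, pathWeight_pair, hW'ji]
        linarith
      · exact lt_of_lt_of_le (hwtr.2 p0 hp0 hpe) (pathWeight_mono hW'ge p0)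
    set L : ℝ := 1 + max 0 d0 - Wmin with hL
    have hLbound : ∀ u v p, IsPathFrom E u v p → max 0 d0 < L + pathWeight W' p := by
      intro u v p hp
      have := hWminle u v p hp
      rw [hL]
      linarith
    set A : Fin n → ℝ := fun u => if u = i then 0 else L with hA
    have hAi : A i = 0 := by rw [hA]; simp
    have hAne : ∀ u, u ≠ i → A u = L := by intro u hu; rw [hA]; simp [hu]
    set S : Fin n → Set ℝ := fun v => ⋃ u : Fin n,
      (fun p => pathWeight W' p + A u) '' {p | IsPathFrom E v u p} with hS
    have hSfin : ∀ v, (S v).Finite :=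
      fun v => Set.finite_iUnion fun u => (paths_finite hdag v u).image _
    have hSmem : ∀ v u p, IsPathFrom E v u p → pathWeight W' p + A u ∈ S v :=
      fun v u p hp => Set.mem_iUnion.2 ⟨u, ⟨p, hp, rfl⟩⟩
    have hSelem : ∀ v r, r ∈ S v → ∃ u p, IsPathFrom E v u p ∧ pathWeight W' p + A u = r := by
      intro v r hr
      rw [hS] at hr
      simp only [Set.mem_iUnion, Set.mem_image, Set.mem_setOf_eq] at hr
      obtain ⟨u, p, hp, hval⟩ := hr
      exact ⟨u, p, hp, hval⟩
    have hSne : ∀ v, (S v).Nonempty := fun v => ⟨_, hSmem v v [v] (isPathFrom_single v)⟩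
    set y : Fin n → ℝ := fun v => sInf (S v) with hy
    have hyle : ∀ v u p, IsPathFrom E v u p → y v ≤ pathWeight W' p + A u :=
      fun v u p hp => csInf_le (hSfin v).bddBelow (hSmem v u p hp)
    have hSrep : ∀ v, ∃ u p, IsPathFrom E v u p ∧ pathWeight W' p + A u = y v :=
      fun v => hSelem v (y v) ((hSne v).csInf_mem (hSfin v))
    have hyi : y i = 0 := by
      apply le_antisymm
      · have h0 := hyle i i [i] (isPathFrom_single i)
        rw [pathWeight_singleton, hAi] at h0
        simpa using h0
      · apply le_csInf (hSne i)
        intro r hr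
        obtain ⟨u, p, hp, hval⟩ := hSelem i r hr
        rw [← hval]
        by_cases hui : u = i
        · subst hui
          rw [path_self hdag hp, pathWeight_singleton, hAi]
          simp
        · have h1 := hLbound i u p hp
          have h2 : (0 : ℝ) ≤ max 0 d0 := le_max_left 0 d0
          rw [hAne u hui]
          linarith
    have hyj : y j = d0 := by
      apply le_antisymm
      · obtain ⟨p0, hp0, hval⟩ := hd0mem
        have h0 := hyle j i p0 hp0
        rw [hAi, hval] at h0
        simpa using h0
      · apply le_csInf (hSne j)
        intro r hr
        obtain ⟨u, p, hp, hval⟩ := hSelem j r hr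
        rw [← hval]
        by_cases hui : u = i
        · subst hui
          rw [hAi, add_zero]
          exact hd0le p hp
        · have h1 := hLbound j u p hp
          have h2 : d0 ≤ max 0 d0 := le_max_right 0 d0
          rw [hAne u hui]
          linarith
    -- the separating point
    set x : Fin n → ℝ := fun v => - y v with hx
    have hxmem : x ∈ wdp (bump C i j t) := by
      intro a0 b0 hab
      by_cases hfin : bump C i j t a0 b0 = ⊤
      · rw [hfin]; exact le_top
      · have hEba : E b0 a0 := by
          by_cases hcase : a0 = i ∧ b0 = j
          · obtain ⟨hh1, hh2⟩ := hcase
            rw [hh1, hh2]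
            exact he
          · have hbeq : bump C i j t a0 b0 = C a0 b0 := by unfold bump; rw [if_neg hcase]
            rw [hbeq] at hfin
            exact (hsupp.2 a0 b0 hab).1 hfin
        rw [coe_cw hfin]
        have hgoal : x a0 - x b0 ≤ W' b0 a0 := by
          obtain ⟨u, p, hp, hval⟩ := hSrep a0
          have hpne : p ≠ [] := by
            intro hh
            rw [hh] at hp
            simp [IsPathFrom] at hp
          obtain ⟨hd, rest, rfl⟩ := List.exists_cons_of_ne_nil hpne
          have hhd : hd = a0 := by simpa using hp.1
          have hcons : IsPathFrom E b0 u (b0 :: hd :: rest) := isPathFrom_cons hp hEba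
          have hle := hyle b0 u (b0 :: hd :: rest) hcons
          rw [pathWeight_cons, hhd] at hle
          have hyb : y b0 ≤ W' b0 a0 + y a0 := by
            rw [← hval, hhd] at *
            linarith
          show - y a0 - - y b0 ≤ W' b0 a0
          linarith
        exact_mod_cast hgoal
    have hxnot : x ∉ wdp C := by
      intro hxC
      have hc := hxC i j hij
      rw [hCeq] at hc
      have hreal : x i - x j ≤ w j i := by exact_mod_cast hc
      have hreal' : - y i - - y j ≤ w j i := hreal
      rw [hyi, hyj] at hreal'
      linarith
    rw [heq] at hxnot
    exact hxnot hxmem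
  constructor
  · constructor
    · intro hall
      by_contra hwtr
      exact keyB hwtr 1 one_pos (hall 1 one_pos)
    · exact keyA
  · constructor
    · rintro ⟨t, ht, heq⟩
      by_contra hwtr
      exact keyB hwtr t ht heq
    · intro h
      exact ⟨1, one_pos, keyA h 1 one_pos⟩
end
end

section
/- Fix a DAG G = ([n], E) with weights w ∈ ℝ^E and weight matrix C. For every DAG H with G^♭_w ⊆ H ⊆ G* and every choice of weights w' ∈ ℝ^{E(H)} on H with weight matrix C', one has Q(C') = Q(C) if and only if w'(e) = w*(e) for every edge e of G^♭_w and w'(e) ≥ w*(e) for every edge e ∈ E(H) \ E^♭_w. (Equivalently, the set of all weighted DAGs (H, w') between G^♭_w and G* with Q(C') = Q(C) is the compactification inside T^{E*} of the cone w* + cone(e_{j→i} : j→i ∈ E* \ E^♭_w) with respect to its recession cone.) -/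
open scoped Classical
noncomputable section

/-!
Since `C` is supported on a DAG, `C*` is the entrywise supremum of `x_i - x_j` over `Q(C)`
(a maximiser is built from the column `C*_{·j}`), so `Q(C) ⊆ Q(D)` exactly when `C* ≤ D` off
the diagonal. Hence `Q(C') = Q(C)` means `C* ≤ C'` on the edges of `H` and `C'* ≤ C` on the
edges of `G`. Given the first, the second is equivalent to `C' ≤ C*` on `G^♭_w`: every walk in
`G` is dominated by a walk in `G^♭_w`, while a walk of at least two `H`-edges undercutting a
reduced edge would expand into a competing path in `G`.
-/

open Finset Relation

section Walks

variable {n : ℕ} {R R' : Fin n → Fin n → Prop} {w w' : Fin n → Fin n → ℝ}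
  {a b i j : Fin n} {c : ℝ} {k : ℕ}

/-- `HasWalk R w j i c k`: some `R`-walk from `j` to `i` has `k` edges and total weight `c`. -/
inductive HasWalk (R : Fin n → Fin n → Prop) (w : Fin n → Fin n → ℝ) :
    Fin n → Fin n → ℝ → ℕ → Prop
  | nil (j : Fin n) : HasWalk R w j j 0 0
  | cons {j m i : Fin n} {c : ℝ} {k : ℕ} :
      R j m → HasWalk R w m i c k → HasWalk R w j i (w j m + c) (k + 1)

namespace HasWalk

theorem single (h : R j i) : HasWalk R w j i (w j i) 1 := by
  simpa using cons h (nil (R := R) (w := w) i)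

theorem trans {d : Fin n} {c₁ c₂ : ℝ} {k₁ k₂ : ℕ} (h₁ : HasWalk R w a b c₁ k₁)
    (h₂ : HasWalk R w b d c₂ k₂) : HasWalk R w a d (c₁ + c₂) (k₁ + k₂) := by
  induction h₁ with
  | nil => simpa using h₂
  | cons h _ ih =>
    rw [add_assoc, Nat.add_right_comm]
    exact cons h (ih h₂)

theorem eq_of_length_eq_zero (h : HasWalk R w j i c 0) : j = i ∧ c = 0 := by
  cases h
  exact ⟨rfl, rfl⟩

theorem sub_le {x : Fin n → ℝ} (hx : ∀ a b, R a b → x b - x a ≤ w a b)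
    (h : HasWalk R w j i c k) : x i - x j ≤ c := by
  induction h with
  | nil => simp
  | cons hjm _ ih => linarith [hx _ _ hjm]

theorem transGen (h : HasWalk R w j i c k) (hk : 0 < k) : TransGen R j i := by
  induction h with
  | nil => omega
  | @cons j m i c k hjm t ih =>
    rcases Nat.eq_zero_or_pos k with rfl | hk
    · obtain ⟨rfl, -⟩ := t.eq_of_length_eq_zero
      exact .single hjm
    · exact .head hjm (ih hk)

theorem exists_of_transGen (w : Fin n → Fin n → ℝ) (h : TransGen R j i) :
    ∃ c k, 0 < k ∧ HasWalk R w j i c k := by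
  induction h using TransGen.head_induction_on with
  | single h => exact ⟨_, _, one_pos, single h⟩
  | head h _ ih =>
    obtain ⟨c, k, -, t⟩ := ih
    exact ⟨_, _, k.succ_pos, cons h t⟩

theorem lift (hR : ∀ a b, R' a b → ∃ c k, 0 < k ∧ c ≤ w' a b ∧ HasWalk R w a b c k)
    (h : HasWalk R' w' j i c k) : ∃ c₀ k₀, k ≤ k₀ ∧ c₀ ≤ c ∧ HasWalk R w j i c₀ k₀ := by
  induction h with
  | nil j => exact ⟨0, 0, le_rfl, le_rfl, nil j⟩
  | cons hjm _ ih =>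
    obtain ⟨c₁, k₁, hk₁, hc₁, h₁⟩ := hR _ _ hjm
    obtain ⟨c₂, k₂, hk₂, hc₂, h₂⟩ := ih
    exact ⟨_, _, by omega, add_le_add hc₁ hc₂, h₁.trans h₂⟩

end HasWalk

theorem pathWeight_cons_cons (p : List (Fin n)) :
    pathWeight w (a :: b :: p) = w a b + pathWeight w (b :: p) := by
  simp [pathWeight]

theorem IsPathFrom.hasWalk {p : List (Fin n)} (h : IsPathFrom R j i p) :
    HasWalk R w j i (pathWeight w p) (p.length - 1) := by
  induction p generalizing j with
  | nil => simp [IsPathFrom] at h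
  | cons a p ih =>
    obtain ⟨hh, hl, hc⟩ := h
    obtain rfl : a = j := by simpa using hh
    cases p with
    | nil =>
      obtain rfl : a = i := by simpa using hl
      simpa [pathWeight] using HasWalk.nil (R := R) (w := w) a
    | cons b p =>
      have hab := List.isChain_cons_cons.1 hc
      simpa [pathWeight_cons_cons] using
        HasWalk.cons hab.1 (ih ⟨rfl, by simpa using hl, hab.2⟩)

theorem HasWalk.exists_isPathFrom (h : HasWalk R w j i c k) :
    ∃ p, IsPathFrom R j i p ∧ pathWeight w p = c ∧ p.length = k + 1 := by
  induction h with
  | nil j => exact ⟨[j], ⟨rfl, rfl, List.isChain_singleton j⟩, by simp [pathWeight], rfl⟩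
  | @cons j m i c k hjm _ ih =>
    obtain ⟨_ | ⟨b, p⟩, ⟨hh, hl, hc⟩, rfl, hlen⟩ := ih
    · simp at hh
    obtain rfl : b = m := by simpa using hh
    exact ⟨j :: b :: p, ⟨rfl, by simpa using hl, List.IsChain.cons_cons hjm hc⟩,
      pathWeight_cons_cons p, by simpa using hlen⟩

theorem IsPathFrom.eq_pair_of_length_eq_two {p : List (Fin n)} (h : IsPathFrom R j i p)
    (hp : p.length = 2) : p = [j, i] := by
  obtain ⟨a, b, rfl⟩ := List.length_eq_two.1 hp
  obtain ⟨h₁, h₂, -⟩ := h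
  simp_all

theorem inWTR_iff : InWTR R w j i ↔ R j i ∧ ∀ c k, HasWalk R w j i c k → k ≠ 1 → w j i < c := by
  refine and_congr_right fun _ => ⟨fun h c k hw hk => ?_, fun h p hp hne => ?_⟩
  · obtain ⟨p, hp, rfl, hlen⟩ := hw.exists_isPathFrom
    exact h p hp fun hpe => hk (by simpa [hpe] using hlen)
  · exact h _ _ hp.hasWalk fun hk => hne (hp.eq_pair_of_length_eq_two (by cases p <;> simp_all))

end Walks

section Ranking

variable {n : ℕ} {R : Fin n → Fin n → Prop} {w : Fin n → Fin n → ℝ} {a b i j : Fin n} {c : ℝ}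
  {k : ℕ}

def IsRanking (R : Fin n → Fin n → Prop) (r : Fin n → Fin n) : Prop :=
  ∀ a b, R a b → r b < r a

namespace IsRanking

variable {r : Fin n → Fin n} (hr : IsRanking R r)
include hr

theorem ne (h : R a b) : a ≠ b := by
  rintro rfl
  exact lt_irrefl _ (hr a a h)

theorem add_length_le (h : HasWalk R w j i c k) : (r i : ℕ) + k ≤ r j := by
  induction h with
  | nil => simp
  | cons hjm _ ih =>
    have := Fin.lt_def.1 (hr _ _ hjm)
    omega

theorem length_lt (h : HasWalk R w j i c k) : k < n := by
  have := hr.add_length_le h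
  have := (r j).isLt
  omega

theorem length_eq_zero (h : HasWalk R w j j c k) : k = 0 := by
  have := hr.add_length_le h
  omega

end IsRanking

theorem IsDAG.not_transGen_self (hdag : IsDAG R) (j : Fin n) : ¬ TransGen R j j := fun h => by
  obtain ⟨c, k, hk, hw⟩ := HasWalk.exists_of_transGen 0 h
  obtain ⟨p, hp, -, hlen⟩ := hw.exists_isPathFrom
  have := hdag j p hp
  omega

/-- Excluding `j` keeps the count below `n` without assuming acyclicity. -/
def dagRank (R : Fin n → Fin n → Prop) (j : Fin n) : Fin n :=
  ⟨#{v | v ≠ j ∧ TransGen R j v}, by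
    simpa using card_lt_univ_of_notMem (x := j) (by simp)⟩

theorem IsDAG.dagRank_lt (hdag : IsDAG R) (h : TransGen R a b) : dagRank R b < dagRank R a := by
  have hba : b ≠ a := by
    rintro rfl
    exact hdag.not_transGen_self b h
  rw [dagRank, dagRank, Fin.mk_lt_mk]
  refine card_lt_card ((ssubset_iff_of_subset ?_).2 ⟨b, ?_, ?_⟩)
  · intro v
    simp only [mem_filter, mem_univ, true_and]
    rintro ⟨-, hbv⟩
    refine ⟨?_, h.trans hbv⟩
    rintro rfl
    exact hdag.not_transGen_self _ (hbv.trans h)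
  · simpa using ⟨hba, h⟩
  · simp

theorem IsDAG.isRanking (hdag : IsDAG R) : IsRanking R (dagRank R) :=
  fun _ _ h => hdag.dagRank_lt (.single h)

theorem IsDAG.isRanking_of_le_eStar {R' : Fin n → Fin n → Prop} (hdag : IsDAG R)
    (hsub : ∀ a b, R' a b → EStar R a b) : IsRanking R' (dagRank R) := by
  intro a b h
  obtain ⟨hab, p, hp⟩ := hsub a b h
  have hw := hp.hasWalk (w := 0)
  refine hdag.dagRank_lt (hw.transGen (Nat.pos_of_ne_zero fun h0 => hab ?_))
  rw [h0] at hw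
  exact hw.eq_of_length_eq_zero.1

end Ranking

section Kleene

variable {n : ℕ} {R : Fin n → Fin n → Prop} {D : Matrix (Fin n) (Fin n) Trop}
  {a b i j : Fin n} {c : ℝ} {k : ℕ}

namespace SupportedOn

variable (hsupp : SupportedOn D R)
include hsupp

theorem apply_eq_cw (h : R a b) : D b a = (cw D a b : Trop) := by
  have hfin : D b a ≠ ⊤ := by
    by_cases hba : b = a
    · rw [hba, hsupp.1]
      exact WithTop.coe_ne_top
    · exact (hsupp.2 b a hba).2 h
  obtain ⟨d, hd⟩ := WithTop.ne_top_iff_exists.1 hfin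
  simp [cw, ← hd]

theorem apply_eq_top (hij : i ≠ j) (h : ¬ R j i) : D i j = ⊤ :=
  not_not.1 fun hfin => h ((hsupp.2 i j hij).1 hfin)

theorem forall_ne_le_iff (hne : ∀ a b, R a b → a ≠ b) {A : Matrix (Fin n) (Fin n) Trop} :
    (∀ i j, i ≠ j → A i j ≤ D i j) ↔ ∀ j i, R j i → A i j ≤ D i j := by
  refine ⟨fun h j i hji => h i j (hne j i hji).symm, fun h i j hij => ?_⟩
  by_cases hji : R j i
  · exact h j i hji
  · rw [hsupp.apply_eq_top hij hji]
    exact le_top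

theorem sub_le_cw {x : Fin n → ℝ} (hx : x ∈ wdp D) (h : R a b) : x b - x a ≤ cw D a b := by
  by_cases hba : b = a
  · subst hba
    simp [cw, hsupp.1]
  · have := hx b a hba
    rw [hsupp.apply_eq_cw h] at this
    exact_mod_cast this

theorem mpPow_le_of_hasWalk (h : HasWalk R (cw D) j i c k) : mpPow D k i j ≤ c := by
  induction h with
  | nil j => simp [mpPow, mpId]
  | @cons j m i c k hjm _ ih =>
    calc mpPow D (k + 1) i j ≤ mpPow D k i m + D m j := inf_le (mem_univ m)
      _ ≤ c + cw D j m := by rw [hsupp.apply_eq_cw hjm]; gcongr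
      _ = (cw D j m + c : ℝ) := by rw [add_comm, WithTop.coe_add]

theorem exists_hasWalk_of_mpPow_ne_top (h : mpPow D k i j ≠ ⊤) :
    ∃ c k', HasWalk R (cw D) j i c k' ∧ (c : Trop) ≤ mpPow D k i j := by
  induction k generalizing j with
  | zero =>
    obtain rfl : i = j := by by_contra hij; simp [mpPow, mpId, hij] at h
    exact ⟨0, 0, .nil i, by simp [mpPow, mpId]⟩
  | succ k ih =>
    obtain ⟨m, -, hm⟩ := exists_mem_eq_inf univ ⟨i, mem_univ i⟩ fun m => mpPow D k i m + D m j
    have hval : mpPow D (k + 1) i j = mpPow D k i m + D m j := hm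
    rw [hval] at h ⊢
    obtain ⟨c, k', hw, hc⟩ := ih (WithTop.add_ne_top.1 h).1
    by_cases hmj : m = j
    · subst hmj
      exact ⟨c, k', hw, by rwa [hsupp.1, add_zero]⟩
    · have hjm : R j m := (hsupp.2 m j hmj).1 (WithTop.add_ne_top.1 h).2
      refine ⟨_, _, .cons hjm hw, ?_⟩
      rw [WithTop.coe_add, add_comm, ← hsupp.apply_eq_cw hjm]
      gcongr

theorem exists_hasWalk_of_kleene_ne_top (h : kleene D i j ≠ ⊤) :
    ∃ c k, HasWalk R (cw D) j i c k ∧ (c : Trop) ≤ kleene D i j := by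
  obtain ⟨k, -, hk⟩ := exists_mem_eq_inf (range n) ⟨0, mem_range.2 i.pos⟩
    fun k => mpPow D k i j
  have hval : kleene D i j = mpPow D k i j := hk
  rw [hval] at h ⊢
  exact hsupp.exists_hasWalk_of_mpPow_ne_top h

theorem sub_le_kleene {x : Fin n → ℝ} (hx : x ∈ wdp D) (i j : Fin n) :
    ((x i - x j : ℝ) : Trop) ≤ kleene D i j := by
  by_cases h : kleene D i j = ⊤
  · simp [h]
  obtain ⟨c, k, hw, hc⟩ := hsupp.exists_hasWalk_of_kleene_ne_top h
  exact (WithTop.coe_le_coe.2 (hw.sub_le fun _ _ h => hsupp.sub_le_cw hx h)).trans hc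

variable {r : Fin n → Fin n} (hr : IsRanking R r)
include hr

theorem kleene_le_of_hasWalk (h : HasWalk R (cw D) j i c k) : kleene D i j ≤ c :=
  (inf_le (mem_range.2 (hr.length_lt h))).trans (hsupp.mpPow_le_of_hasWalk h)

theorem kleene_self (i : Fin n) : kleene D i i = 0 := by
  refine le_antisymm (by simpa using hsupp.kleene_le_of_hasWalk hr (.nil i)) ?_
  have hfin : kleene D i i ≠ ⊤ :=
    ne_top_of_le_ne_top WithTop.coe_ne_top (hsupp.kleene_le_of_hasWalk hr (.nil i))
  obtain ⟨c, k, hw, hc⟩ := hsupp.exists_hasWalk_of_kleene_ne_top hfin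
  obtain rfl := hr.length_eq_zero hw
  obtain ⟨-, rfl⟩ := hw.eq_of_length_eq_zero
  simpa using hc

theorem kleene_le_apply (i j : Fin n) : kleene D i j ≤ D i j := by
  by_cases hji : R j i
  · rw [hsupp.apply_eq_cw hji]
    exact hsupp.kleene_le_of_hasWalk hr (.single hji)
  by_cases hij : i = j
  · rw [hij, hsupp.kleene_self hr, hsupp.1]
  · rw [hsupp.apply_eq_top hij hji]
    exact le_top

theorem kleene_le_add (i m j : Fin n) : kleene D i j ≤ kleene D i m + kleene D m j := by
  by_cases him : kleene D i m = ⊤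
  · simp [him]
  by_cases hmj : kleene D m j = ⊤
  · simp [hmj]
  obtain ⟨c₁, k₁, hw₁, hc₁⟩ := hsupp.exists_hasWalk_of_kleene_ne_top hmj
  obtain ⟨c₂, k₂, hw₂, hc₂⟩ := hsupp.exists_hasWalk_of_kleene_ne_top him
  calc kleene D i j ≤ (c₁ + c₂ : ℝ) := hsupp.kleene_le_of_hasWalk hr (hw₁.trans hw₂)
    _ ≤ kleene D m j + kleene D i m := by rw [WithTop.coe_add]; gcongr
    _ = kleene D i m + kleene D m j := add_comm _ _

end SupportedOn

end Kleene

section Potential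

variable {n : ℕ} {R : Fin n → Fin n → Prop} {D : Matrix (Fin n) (Fin n) Trop}

/-- The `Trop`-valued points of `Q(D)`: `X a - X b ≤ D a b`, written without subtraction. -/
def IsFeasiblePotential (D : Matrix (Fin n) (Fin n) Trop) (X : Fin n → Trop) : Prop :=
  ∀ a b, X a ≤ D a b + X b

namespace IsFeasiblePotential

variable {X Y : Fin n → Trop}

theorem inf (hX : IsFeasiblePotential D X) (hY : IsFeasiblePotential D Y) :
    IsFeasiblePotential D (X ⊓ Y) := fun a b =>
  calc X a ⊓ Y a ≤ (D a b + X b) ⊓ (D a b + Y b) := inf_le_inf (hX a b) (hY a b)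
    _ = D a b + (X ⊓ Y) b := min_add_add_left _ _ _

theorem finsetInf {ι : Type*} {s : Finset ι} {X : ι → Fin n → Trop}
    (hX : ∀ u, IsFeasiblePotential D (X u)) : IsFeasiblePotential D (s.inf X) :=
  Finset.inf_induction (fun _ _ => by simp) (fun _ h₁ _ h₂ => h₁.inf h₂) fun u _ => hX u

theorem const_add (hX : IsFeasiblePotential D X) (M : Trop) :
    IsFeasiblePotential D fun v => M + X v := fun a b =>
  calc M + X a ≤ M + (D a b + X b) := by gcongr; exact hX a b
    _ = D a b + (M + X b) := add_left_comm _ _ _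

theorem mem_wdp {x : Fin n → ℝ} (hx : IsFeasiblePotential D fun v => (x v : Trop)) :
    x ∈ wdp D := by
  intro a b _
  by_cases h : D a b = ⊤
  · rw [h]
    exact le_top
  obtain ⟨d, hd⟩ := WithTop.ne_top_iff_exists.1 h
  have := hx a b
  dsimp only at this
  rw [← hd] at this ⊢
  have : x a ≤ d + x b := by exact_mod_cast this
  exact_mod_cast (by linarith : x a - x b ≤ d)

end IsFeasiblePotential

variable (hsupp : SupportedOn D R) {r : Fin n → Fin n} (hr : IsRanking R r)
include hsupp hr

theorem isFeasiblePotential_kleene (j : Fin n) :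
    IsFeasiblePotential D fun v => kleene D v j := fun a b =>
  (hsupp.kleene_le_add hr a b j).trans (by gcongr; exact hsupp.kleene_le_apply hr a b)

/-- The witness is the column `kleene D · j`, made finite by taking its minimum with a
translate of the finite potential `v ↦ min_u kleene D v u`. -/
theorem exists_mem_wdp_inf_le_sub (i j : Fin n) (t : ℝ) :
    ∃ x ∈ wdp D, kleene D i j ⊓ t ≤ ((x i - x j : ℝ) : Trop) := by
  set Y : Fin n → Trop := univ.inf fun u v => kleene D v u
  have hY : IsFeasiblePotential D Y :=
    IsFeasiblePotential.finsetInf fun u => isFeasiblePotential_kleene hsupp hr u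
  have hY_le : ∀ v, Y v ≤ 0 := fun v => by
    rw [show Y v = univ.inf fun u => kleene D v u from Finset.inf_apply ..,
      ← hsupp.kleene_self hr v]
    exact inf_le (mem_univ v)
  have hY_fin v : Y v ≠ ⊤ := ne_top_of_le_ne_top WithTop.coe_ne_top (hY_le v)
  obtain ⟨y, hy⟩ := WithTop.ne_top_iff_exists.1 (hY_fin i)
  set X : Fin n → Trop := (fun v => kleene D v j) ⊓ fun v => ((t - y : ℝ) : Trop) + Y v
  have hX : IsFeasiblePotential D X :=
    (isFeasiblePotential_kleene hsupp hr j).inf (hY.const_add _)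
  have hX_fin v : X v ≠ ⊤ :=
    ne_top_of_le_ne_top (WithTop.add_ne_top.2 ⟨WithTop.coe_ne_top, hY_fin v⟩) inf_le_right
  set x : Fin n → ℝ := fun v => (X v).untop (hX_fin v)
  have hx v : (x v : Trop) = X v := WithTop.coe_untop _ _
  refine ⟨x, IsFeasiblePotential.mem_wdp (by simpa only [hx] using hX), ?_⟩
  have hxj : x j ≤ 0 := by
    have : X j ≤ 0 := inf_le_left.trans (hsupp.kleene_self hr j).le
    rw [← hx] at this
    exact_mod_cast this
  have hxi : kleene D i j ⊓ t = x i := by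
    rw [hx]
    show _ = kleene D i j ⊓ (((t - y : ℝ) : Trop) + Y i)
    rw [← hy, ← WithTop.coe_add, sub_add_cancel]
  rw [hxi]
  exact_mod_cast (by linarith : x i ≤ x i - x j)

theorem wdp_subset_wdp_iff {D' : Matrix (Fin n) (Fin n) Trop} :
    wdp D ⊆ wdp D' ↔ ∀ i j, i ≠ j → kleene D i j ≤ D' i j := by
  refine ⟨fun h i j hij => ?_, fun h x hx i j hij => (hsupp.sub_le_kleene hx i j).trans (h i j hij)⟩
  by_cases htop : D' i j = ⊤
  · rw [htop]
    exact le_top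
  obtain ⟨d, hd⟩ := WithTop.ne_top_iff_exists.1 htop
  obtain ⟨x, hx, hle⟩ := exists_mem_wdp_inf_le_sub hsupp hr i j (d + 1)
  have := hle.trans (h hx i j hij)
  rw [← hd, inf_le_iff] at this
  rw [← hd]
  exact this.resolve_right (by exact_mod_cast (by linarith : ¬ d + 1 ≤ d))

end Potential

section Reduction

variable {n : ℕ} {R R' : Fin n → Fin n → Prop} {w : Fin n → Fin n → ℝ}
  {D D' : Matrix (Fin n) (Fin n) Trop} {r r' : Fin n → Fin n} {i j : Fin n} {c : ℝ} {k : ℕ}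

theorem InWTR.le_of_hasWalk (hw : InWTR R w j i) (h : HasWalk R w j i c k) : w j i ≤ c := by
  rcases eq_or_ne k 1 with rfl | hk
  · cases h with
    | cons _ t =>
      obtain ⟨rfl, rfl⟩ := t.eq_of_length_eq_zero
      simp
  · exact ((inWTR_iff.1 hw).2 c k h hk).le

theorem InWTR.kleene_eq (hsupp : SupportedOn D R) (hr : IsRanking R r)
    (hw : InWTR R (cw D) j i) : kleene D i j = D i j := by
  refine le_antisymm (hsupp.kleene_le_apply hr i j) ?_
  rw [hsupp.apply_eq_cw hw.1]
  have hfin : kleene D i j ≠ ⊤ := ne_top_of_le_ne_top WithTop.coe_ne_top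
    ((hsupp.kleene_le_apply hr i j).trans_eq (hsupp.apply_eq_cw hw.1))
  obtain ⟨c, k, h, hc⟩ := hsupp.exists_hasWalk_of_kleene_ne_top hfin
  exact (WithTop.coe_le_coe.2 (hw.le_of_hasWalk h)).trans hc

/-- A non-reduced edge is replaced by a path of at least two edges and no larger weight; each
of its pieces has a smaller rank gap `r j - r i`, which is the induction parameter. -/
theorem IsRanking.exists_hasWalk_inWTR_le (hr : IsRanking R r) (h : HasWalk R w j i c k) :
    ∃ c' k', c' ≤ c ∧ HasWalk (InWTR R w) w j i c' k' := by
  obtain ⟨g, hg⟩ : ∃ g, (r j : ℕ) ≤ r i + g := ⟨r j, by omega⟩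
  induction g using Nat.strong_induction_on generalizing j i c k with
  | _ g ih =>
  have edge : ∀ a b, R a b → (r a : ℕ) ≤ r b + g →
      ∃ c' k', c' ≤ w a b ∧ HasWalk (InWTR R w) w a b c' k' := by
    intro a b hab hgap
    by_cases hw : InWTR R w a b
    · exact ⟨_, _, le_rfl, .single hw⟩
    rw [inWTR_iff] at hw
    push Not at hw
    obtain ⟨c₀, k₀, hp, hk₀, hc₀⟩ := hw hab
    cases hp with
    | nil => exact absurd rfl (hr.ne hab)
    | @cons _ m _ c₁ k₁ ham t =>
      have h₁ := Fin.lt_def.1 (hr _ _ ham)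
      have h₂ := hr.add_length_le t
      obtain ⟨c₂, k₂, hc₂, w₂⟩ := ih (g - 1) (by omega) (.single ham) (by omega)
      obtain ⟨c₃, k₃, hc₃, w₃⟩ := ih (g - 1) (by omega) t (by omega)
      exact ⟨_, _, by linarith, w₂.trans w₃⟩
  cases h with
  | nil => exact ⟨0, 0, le_rfl, .nil _⟩
  | @cons _ m _ c₁ k₁ hjm t =>
    have h₁ := Fin.lt_def.1 (hr _ _ hjm)
    have h₂ := hr.add_length_le t
    obtain ⟨c₂, k₂, hc₂, w₂⟩ := edge j m hjm (by omega)
    obtain ⟨c₃, k₃, hc₃, w₃⟩ := ih (g - 1) (by omega) t (by omega)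
    exact ⟨_, _, by linarith, w₂.trans w₃⟩

variable (hsupp : SupportedOn D R) (hr : IsRanking R r) (hsupp' : SupportedOn D' R')
  (hr' : IsRanking R' r')
include hsupp hr hsupp' hr'

theorem kleene_le_apply_of_inWTR (hflat : ∀ a b, InWTR R (cw D) a b → R' a b)
    (hle : ∀ a b, InWTR R (cw D) a b → D' b a ≤ D b a) (h : R j i) : kleene D' i j ≤ D i j := by
  obtain ⟨c, k, hc, hw⟩ := hr.exists_hasWalk_inWTR_le (HasWalk.single (w := cw D) h)
  have hedge : ∀ a b, InWTR R (cw D) a b →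
      ∃ c k, 0 < k ∧ c ≤ cw D a b ∧ HasWalk R' (cw D') a b c k := fun a b hab => by
    have := hle a b hab
    rw [hsupp.apply_eq_cw hab.1, hsupp'.apply_eq_cw (hflat a b hab)] at this
    exact ⟨_, 1, one_pos, by exact_mod_cast this, .single (hflat a b hab)⟩
  obtain ⟨c₀, k₀, -, hc₀, hw₀⟩ := hw.lift hedge
  rw [hsupp.apply_eq_cw h]
  exact (hsupp'.kleene_le_of_hasWalk hr' hw₀).trans (by exact_mod_cast hc₀.trans hc)

/-- If `D' i j` were beaten by an `R'`-walk of two or more edges, expanding each of its edges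
into a cheapest `R`-walk would give a competitor of the reduced edge `j → i`. -/
theorem apply_le_of_kleene_le_apply (hlb : ∀ a b, R' a b → kleene D b a ≤ D' b a)
    (hw : InWTR R (cw D) j i) (hk : kleene D' i j ≤ D i j) : D' i j ≤ D i j := by
  rw [hsupp.apply_eq_cw hw.1] at hk ⊢
  obtain ⟨c, k, h, hc⟩ :=
    hsupp'.exists_hasWalk_of_kleene_ne_top (ne_top_of_le_ne_top WithTop.coe_ne_top hk)
  have hexpand : ∀ a b, R' a b → ∃ c k, 0 < k ∧ c ≤ cw D' a b ∧ HasWalk R (cw D) a b c k := by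
    intro a b hab
    have hle := hlb a b hab
    rw [hsupp'.apply_eq_cw hab] at hle
    obtain ⟨c, k, hw, hc⟩ :=
      hsupp.exists_hasWalk_of_kleene_ne_top (ne_top_of_le_ne_top WithTop.coe_ne_top hle)
    refine ⟨c, k, Nat.pos_of_ne_zero fun hk => ?_, by exact_mod_cast hc.trans hle, hw⟩
    subst hk
    exact hr'.ne hab hw.eq_of_length_eq_zero.1
  cases h with
  | nil => exact absurd rfl (hr.ne hw.1)
  | @cons _ m _ c₁ k₁ hjm t =>
    rcases Nat.eq_zero_or_pos k₁ with rfl | hk₁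
    · obtain ⟨rfl, rfl⟩ := t.eq_of_length_eq_zero
      rw [hsupp'.apply_eq_cw hjm]
      simpa using hc.trans hk
    · obtain ⟨c₀, k₀, hk₀, hc₀, hw₀⟩ := (HasWalk.cons hjm t).lift hexpand
      have hlt := (inWTR_iff.1 hw).2 c₀ k₀ hw₀ (by omega)
      have : cw D' j m + c₁ ≤ cw D j i := by exact_mod_cast hc.trans hk
      linarith

end Reduction

/-- Fix a weighted DAG `(G, w)` with weight matrix `C`. For every DAG
`H` with `G^♭_w ⊆ H ⊆ G*` and every weights `w'` on `H` with weight matrix `C'`, one has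
`Q(C') = Q(C)` iff `w'(e) = w*(e)` for every edge `e` of `G^♭_w` and `w'(e) ≥ w*(e)` for
every edge `e ∈ E(H) \ E^♭_w` (the entry `(kleene C) i j` being `w*(j→i)`). -/
theorem stmt7 {n : ℕ} (E EH : Fin n → Fin n → Prop) (C C' : Matrix (Fin n) (Fin n) Trop)
    (hdag : IsDAG E) (hsupp : SupportedOn C E)
    (hflat : ∀ j i, InWTR E (cw C) j i → EH j i)
    (hsub : ∀ j i, EH j i → EStar E j i)
    (hsupp' : SupportedOn C' EH) :
    wdp C' = wdp C ↔
      (∀ j i, InWTR E (cw C) j i → C' i j = kleene C i j) ∧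
      (∀ j i, EH j i → ¬ InWTR E (cw C) j i → kleene C i j ≤ C' i j) := by
  have hr : IsRanking E (dagRank E) := hdag.isRanking
  have hr' : IsRanking EH (dagRank E) := hdag.isRanking_of_le_eStar hsub
  have hkleene j i (hw : InWTR E (cw C) j i) : kleene C i j = C i j := hw.kleene_eq hsupp hr
  rw [Set.Subset.antisymm_iff, wdp_subset_wdp_iff hsupp' hr', wdp_subset_wdp_iff hsupp hr,
    hsupp.forall_ne_le_iff fun _ _ => hr.ne, hsupp'.forall_ne_le_iff fun _ _ => hr'.ne]
  constructor
  · rintro ⟨hup, hlb⟩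
    refine ⟨fun j i hw => le_antisymm ?_ (hlb j i (hflat j i hw)), fun j i he _ => hlb j i he⟩
    rw [hkleene j i hw]
    exact apply_le_of_kleene_le_apply hsupp hr hsupp' hr' hlb hw (hup j i hw.1)
  · rintro ⟨heq, hge⟩
    refine ⟨fun j i he => kleene_le_apply_of_inWTR hsupp hr hsupp' hr' hflat
      (fun a b hw => (heq a b hw).trans_le (hkleene a b hw).le) he, fun j i he => ?_⟩
    by_cases hw : InWTR E (cw C) j i
    · exact (heq j i hw).ge
    · exact hge j i he hw
end
end
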